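/- arXiv:quant-ph/0303045 — 5 statements merged into one kernel-verified Lean document; each statement's English description precedes it below -/
import Mathlib

section
/- The entanglement of formation is subadditive: E_F(ρ₁ ⊗ ρ₂) ≤ E_F(ρ₁) + E_F(ρ₂) for all bipartite states ρ₁, ρ₂. -/
open scoped Kronecker ComplexOrder

noncomputable section

variable {α β : Type*} [Fintype α] [DecidableEq α] [Fintype β] [DecidableEq β]

/-- A density operator: positive semidefinite with unit trace. -/
def IsState (ρ : Matrix α α ℂ) : Prop := ρ.PosSemidef ∧ ρ.trace = 1

/-- A unit vector. -/
def UnitVector (ψ : α → ℂ) : Prop := ∑ i, Complex.normSq (ψ i) = 1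

/-- Rank-one projector |ψ⟩⟨ψ|. -/
def proj (ψ : α → ℂ) : Matrix α α ℂ := Matrix.vecMulVec ψ (star ψ)

/-- Eigenvalues of a Hermitian matrix (junk value 0 otherwise). -/
def eigs (M : Matrix α α ℂ) : α → ℝ := if h : M.IsHermitian then h.eigenvalues else 0

/-- Von Neumann entropy S(ρ) = -Tr ρ log ρ (with 0 log 0 = 0). -/
def vnEntropy (ρ : Matrix α α ℂ) : ℝ := -∑ i, eigs ρ i * Real.log (eigs ρ i)

/-- Functional calculus for Hermitian matrices (junk value 0 otherwise). -/
def mfun (g : ℝ → ℝ) (M : Matrix α α ℂ) : Matrix α α ℂ :=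
  if h : M.IsHermitian then
    (h.eigenvectorUnitary : Matrix α α ℂ) * Matrix.diagonal (fun i => (g (h.eigenvalues i) : ℂ)) *
      star (h.eigenvectorUnitary : Matrix α α ℂ)
  else 0

/-- Matrix logarithm (spectral, with the convention log 0 = 0). -/
def mlog : Matrix α α ℂ → Matrix α α ℂ := mfun Real.log

/-- Matrix exponential (spectral). -/
def mexp : Matrix α α ℂ → Matrix α α ℂ := mfun Real.exp

/-- Matrix real power (spectral). -/
def mpow (p : ℝ) : Matrix α α ℂ → Matrix α α ℂ := mfun (fun x => x ^ p)

/-- Maximal eigenvalue of a Hermitian matrix. -/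
def lmax (M : Matrix α α ℂ) : ℝ := ⨆ i, eigs M i

/-- Schatten q-norm of a positive semidefinite matrix. -/
def schatten (q : ℝ) (M : Matrix α α ℂ) : ℝ := (∑ i, eigs M i ^ q) ^ (1/q)

/-- Partial trace over the first tensor factor. -/
def trA (ρ : Matrix (α × β) (α × β) ℂ) : Matrix β β ℂ := fun i j => ∑ k, ρ (k, i) (k, j)

/-- Partial trace over the second tensor factor. -/
def trB (ρ : Matrix (α × β) (α × β) ℂ) : Matrix α α ℂ := fun i j => ∑ k, ρ (i, k) (j, k)

/-- The conjugate (Legendre-type transform) f*(X) = sup over states ρ of (Tr[ρX] - f ρ). -/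
def conjF (f : Matrix α α ℂ → ℝ) (X : Matrix α α ℂ) : ℝ :=
  sSup {x | ∃ ρ, IsState ρ ∧ x = (ρ * X).trace.re - f ρ}

/-- The biconjugate / convex closure f̂(ρ) = sup over Hermitian X of (Tr[ρX] - f*(X)). -/
def cclF (f : Matrix α α ℂ → ℝ) (ρ : Matrix α α ℂ) : ℝ :=
  sSup {x | ∃ X : Matrix α α ℂ, X.IsHermitian ∧ x = (ρ * X).trace.re - conjF f X}

/-- Boundedness of a function on the state space. -/
def BoundedOnStates (f : Matrix α α ℂ → ℝ) : Prop := ∃ C, ∀ ρ, IsState ρ → |f ρ| ≤ C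

/-- Values of finite convex combinations Σ pᵢ f(ρᵢ) over ensembles realizing ρ. -/
def ensembleValues (f : Matrix α α ℂ → ℝ) (ρ : Matrix α α ℂ) : Set ℝ :=
  {x | ∃ (N : ℕ) (p : Fin N → ℝ) (σ : Fin N → Matrix α α ℂ),
      (∀ i, 0 ≤ p i) ∧ ∑ i, p i = 1 ∧ (∀ i, IsState (σ i)) ∧
      ∑ i, p i • σ i = ρ ∧ x = ∑ i, p i * f (σ i)}

/-- Entanglement of formation of a bipartite state on H_A ⊗ H_B. -/
def EoF (ρ : Matrix (α × β) (α × β) ℂ) : ℝ :=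
  sInf {x | ∃ (N : ℕ) (p : Fin N → ℝ) (ψ : Fin N → (α × β → ℂ)),
      (∀ i, 0 ≤ p i) ∧ ∑ i, p i = 1 ∧ (∀ i, UnitVector (ψ i)) ∧
      ∑ i, p i • proj (ψ i) = ρ ∧ x = ∑ i, p i * vnEntropy (trB (proj (ψ i)))}

/-- g(M) = max over unit ψ of (Tr[Ψ log M] - S(Tr_A Ψ)). -/
def gFun (M : Matrix (α × β) (α × β) ℂ) : ℝ :=
  sSup {x | ∃ ψ : α × β → ℂ, UnitVector ψ ∧
      x = (proj ψ * mlog M).trace.re - vnEntropy (trA (proj ψ))}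

end

section AuxLemmas
open Matrix Polynomial

set_option linter.unusedSectionVars false
set_option maxHeartbeats 1000000

namespace EoFAux

variable {n m : Type*} [Fintype n] [DecidableEq n] [Fintype m] [DecidableEq m]

lemma charpoly_diag (d : n → ℂ) :
    (Matrix.diagonal d).charpoly = ∏ i, (X - C (d i)) := by
  unfold Matrix.charpoly
  rw [show charmatrix (diagonal d) = diagonal (fun i => X - C (d i)) from ?_, det_diagonal]
  ext i j
  by_cases h : i = j
  · subst h; simp [charmatrix_apply_eq]
  · simp [charmatrix_apply_ne _ _ _ h, diagonal_apply_ne _ h]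

lemma charpoly_unitary_conj {U : Matrix n n ℂ} (hU : U ∈ Matrix.unitaryGroup n ℂ)
    (B : Matrix n n ℂ) : (U * B * star U).charpoly = B.charpoly := by
  have hUU : U * star U = 1 := mem_unitaryGroup_iff.mp hU
  have hc : ∀ M : Matrix n n ℂ[X], Matrix.scalar n (X : ℂ[X]) * M = M * Matrix.scalar n X :=
    fun M => (Matrix.scalar_commute (X : ℂ[X]) (fun r => Commute.all _ _) M).eq
  have key : charmatrix (U * B * star U)
      = (C : ℂ →+* ℂ[X]).mapMatrix U * charmatrix B * (C : ℂ →+* ℂ[X]).mapMatrix (star U) := by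
    unfold charmatrix
    rw [mul_sub, sub_mul]
    congr 1
    · rw [← hc, mul_assoc, ← _root_.map_mul ((C : ℂ →+* ℂ[X]).mapMatrix) U (star U), hUU,
        RingHom.map_one, mul_one]
    · rw [← _root_.map_mul ((C : ℂ →+* ℂ[X]).mapMatrix) U B,
        ← _root_.map_mul ((C : ℂ →+* ℂ[X]).mapMatrix) (U * B) (star U)]
  have hone : (C : ℂ →+* ℂ[X]).mapMatrix U * (C : ℂ →+* ℂ[X]).mapMatrix (star U) = 1 := by
    rw [← _root_.map_mul ((C : ℂ →+* ℂ[X]).mapMatrix) U (star U), hUU, RingHom.map_one]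
  show (charmatrix _).det = (charmatrix B).det
  rw [key, det_mul, det_mul, mul_comm ((C : ℂ →+* ℂ[X]).mapMatrix U).det, mul_assoc,
    ← det_mul, hone, det_one, mul_one]

lemma eig_multiset {A : Matrix n n ℂ} (hA : A.IsHermitian) {U : Matrix n n ℂ}
    (hU : U ∈ Matrix.unitaryGroup n ℂ) {d : n → ℝ}
    (hAd : A = U * Matrix.diagonal (fun i => (d i : ℂ)) * star U) :
    Multiset.map hA.eigenvalues Finset.univ.val = Multiset.map d Finset.univ.val := by
  have h1 : A.charpoly = ∏ i, (X - C ((d i : ℂ))) := by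
    rw [hAd, charpoly_unitary_conj hU, charpoly_diag]
  have h2 : A.charpoly = ∏ i, (X - C ((hA.eigenvalues i : ℂ))) := by
    conv_lhs => rw [hA.spectral_theorem, Unitary.conjStarAlgAut_apply]
    rw [charpoly_unitary_conj (hA.eigenvectorUnitary).2, charpoly_diag]
    rfl
  have hroots : ∀ c : n → ℂ, (∏ i, (X - C (c i))).roots = Multiset.map c Finset.univ.val := by
    intro c
    rw [Polynomial.roots_prod _ _ (by
      apply Polynomial.Monic.ne_zero
      exact monic_prod_of_monic _ _ (fun i _ => monic_X_sub_C _))]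
    simp [Polynomial.roots_X_sub_C, Multiset.bind_singleton]
  have hcc : Multiset.map (fun i => (hA.eigenvalues i : ℂ)) Finset.univ.val
      = Multiset.map (fun i => (d i : ℂ)) Finset.univ.val := by
    rw [← hroots, ← hroots, ← h1, ← h2]
  have := congrArg (Multiset.map Complex.re) hcc
  simpa [Multiset.map_map, Function.comp] using this

lemma sum_g_eigenvalues {A : Matrix n n ℂ} (hA : A.IsHermitian) {U : Matrix n n ℂ}
    (hU : U ∈ Matrix.unitaryGroup n ℂ) {d : n → ℝ}
    (hAd : A = U * Matrix.diagonal (fun i => (d i : ℂ)) * star U) (g : ℝ → ℝ) :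
    ∑ i, g (hA.eigenvalues i) = ∑ i, g (d i) := by
  have := congrArg (fun s => (Multiset.map g s).sum) (eig_multiset hA hU hAd)
  simp only [Multiset.map_map, Function.comp] at this
  rw [show (∑ i, g (hA.eigenvalues i))
      = (Multiset.map (fun i => g (hA.eigenvalues i)) Finset.univ.val).sum from rfl,
    show (∑ i, g (d i)) = (Multiset.map (fun i => g (d i)) Finset.univ.val).sum from rfl]
  exact this

lemma trace_eq_sum_eigs {A : Matrix n n ℂ} (hA : A.IsHermitian) :
    A.trace = ∑ i, (hA.eigenvalues i : ℂ) := by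
  conv_lhs => rw [hA.spectral_theorem, Unitary.conjStarAlgAut_apply]
  rw [Matrix.trace_mul_cycle]
  rw [show (star (hA.eigenvectorUnitary : Matrix n n ℂ)) * (hA.eigenvectorUnitary : Matrix n n ℂ)
      = 1 from Unitary.coe_star_mul_self _, one_mul, Matrix.trace_diagonal]
  rfl

lemma sum_eigs_eq_one {A : Matrix n n ℂ} (hA : A.IsHermitian) (ht : A.trace = 1) :
    ∑ i, hA.eigenvalues i = 1 := by
  have h1 := trace_eq_sum_eigs hA
  rw [ht] at h1
  have h2 : ((∑ i, hA.eigenvalues i : ℝ) : ℂ) = 1 := by push_cast; rw [← h1]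
  exact_mod_cast h2

lemma kron_conjTranspose (A : Matrix n n ℂ) (B : Matrix m m ℂ) :
    (Matrix.kroneckerMap (· * ·) A B)ᴴ = Matrix.kroneckerMap (· * ·) Aᴴ Bᴴ := by
  ext ⟨i, j⟩ ⟨k, l⟩
  simp [Matrix.conjTranspose_apply, Matrix.kroneckerMap_apply, star_mul']
  try ring

lemma kron_unitary {U : Matrix n n ℂ} {V : Matrix m m ℂ}
    (hU : U ∈ Matrix.unitaryGroup n ℂ) (hV : V ∈ Matrix.unitaryGroup m ℂ) :
    Matrix.kroneckerMap (· * ·) U V ∈ Matrix.unitaryGroup (n × m) ℂ := by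
  rw [Matrix.mem_unitaryGroup_iff]
  show _ * (Matrix.kroneckerMap (· * ·) U V)ᴴ = 1
  rw [kron_conjTranspose, ← Matrix.mul_kronecker_mul,
    show U * Uᴴ = 1 from Matrix.mem_unitaryGroup_iff.mp hU,
    show V * Vᴴ = 1 from Matrix.mem_unitaryGroup_iff.mp hV, Matrix.one_kronecker_one]

lemma isHermitian_conj_diag (U : Matrix n n ℂ) (d : n → ℝ) :
    (U * Matrix.diagonal (fun i => (d i : ℂ)) * star U).IsHermitian := by
  have hD : (Matrix.diagonal (fun i => (d i : ℂ)))ᴴ = Matrix.diagonal (fun i => (d i : ℂ)) := by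
    rw [Matrix.diagonal_conjTranspose,
      show (star fun i => ((d i : ℝ) : ℂ)) = fun i => ((d i : ℝ) : ℂ) from
        funext fun i => Complex.conj_ofReal (d i)]
  show _ᴴ = _
  rw [Matrix.star_eq_conjTranspose, Matrix.conjTranspose_mul, Matrix.conjTranspose_mul,
    Matrix.conjTranspose_conjTranspose, hD, mul_assoc]

lemma sum_g_eigs {A : Matrix n n ℂ} {U : Matrix n n ℂ}
    (hU : U ∈ Matrix.unitaryGroup n ℂ) {d : n → ℝ}
    (hAd : A = U * Matrix.diagonal (fun i => (d i : ℂ)) * star U) (g : ℝ → ℝ) :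
    ∑ i, g (eigs A i) = ∑ i, g (d i) := by
  have hA : A.IsHermitian := hAd ▸ isHermitian_conj_diag U d
  rw [show eigs A = hA.eigenvalues from dif_pos hA]
  exact sum_g_eigenvalues hA hU hAd g

lemma xlogx_mul {a b : ℝ} (ha : 0 ≤ a) (hb : 0 ≤ b) :
    (a * b) * Real.log (a * b) = (a * Real.log a) * b + a * (b * Real.log b) := by
  rcases eq_or_lt_of_le ha with h | h
  · simp [← h]
  rcases eq_or_lt_of_le hb with h' | h'
  · simp [← h']
  rw [Real.log_mul h.ne' h'.ne']
  ring

lemma vnEntropy_nonneg {A : Matrix n n ℂ} (h : A.PosSemidef) (ht : A.trace = 1) :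
    0 ≤ vnEntropy A := by
  have hH := h.1
  rw [vnEntropy, show eigs A = hH.eigenvalues from dif_pos hH, neg_nonneg]
  apply Finset.sum_nonpos
  intro i _
  have h0 : 0 ≤ hH.eigenvalues i := h.eigenvalues_nonneg i
  have h1 : hH.eigenvalues i ≤ 1 := by
    rw [← sum_eigs_eq_one hH ht]
    exact Finset.single_le_sum (fun j _ => h.eigenvalues_nonneg j) (Finset.mem_univ i)
  exact mul_nonpos_of_nonneg_of_nonpos h0 (Real.log_nonpos h0 h1)

lemma vnEntropy_kron {M₁ : Matrix n n ℂ} {M₂ : Matrix m m ℂ}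
    (h₁ : M₁.PosSemidef) (h₂ : M₂.PosSemidef) (t₁ : M₁.trace = 1) (t₂ : M₂.trace = 1) :
    vnEntropy (Matrix.kroneckerMap (· * ·) M₁ M₂) = vnEntropy M₁ + vnEntropy M₂ := by
  have hH₁ := h₁.1
  have hH₂ := h₂.1
  set e₁ := hH₁.eigenvalues with he₁
  set e₂ := hH₂.eigenvalues with he₂
  set U₁ := (hH₁.eigenvectorUnitary : Matrix n n ℂ)
  set U₂ := (hH₂.eigenvectorUnitary : Matrix m m ℂ)
  have hdec : Matrix.kroneckerMap (· * ·) M₁ M₂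
      = Matrix.kroneckerMap (· * ·) U₁ U₂
        * Matrix.diagonal (fun p : n × m => ((e₁ p.1 * e₂ p.2 : ℝ) : ℂ))
        * star (Matrix.kroneckerMap (· * ·) U₁ U₂) := by
    rw [show star (Matrix.kroneckerMap (· * ·) U₁ U₂)
        = Matrix.kroneckerMap (· * ·) (star U₁) (star U₂) from kron_conjTranspose U₁ U₂]
    rw [show Matrix.diagonal (fun p : n × m => ((e₁ p.1 * e₂ p.2 : ℝ) : ℂ))
        = Matrix.kroneckerMap (· * ·) (Matrix.diagonal (RCLike.ofReal ∘ e₁))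
            (Matrix.diagonal (RCLike.ofReal ∘ e₂)) from by
      rw [Matrix.diagonal_kronecker_diagonal]
      congr 1
      funext p
      push_cast
      rfl]
    rw [← Matrix.mul_kronecker_mul, ← Matrix.mul_kronecker_mul]
    exact congrArg₂ _ hH₁.spectral_theorem hH₂.spectral_theorem
  have hkU := kron_unitary (hH₁.eigenvectorUnitary).2 (hH₂.eigenvectorUnitary).2
  have hsum := sum_g_eigs hkU hdec (fun x => x * Real.log x)
  have s₁ : ∑ i, e₁ i = 1 := sum_eigs_eq_one hH₁ t₁
  have s₂ : ∑ j, e₂ j = 1 := sum_eigs_eq_one hH₂ t₂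
  have key : ∑ p : n × m, (e₁ p.1 * e₂ p.2) * Real.log (e₁ p.1 * e₂ p.2)
      = (∑ i, e₁ i * Real.log (e₁ i)) + (∑ j, e₂ j * Real.log (e₂ j)) := by
    rw [Fintype.sum_prod_type]
    have hpt : ∀ i j, (e₁ i * e₂ j) * Real.log (e₁ i * e₂ j)
        = (e₁ i * Real.log (e₁ i)) * e₂ j + e₁ i * (e₂ j * Real.log (e₂ j)) :=
      fun i j => xlogx_mul (h₁.eigenvalues_nonneg i) (h₂.eigenvalues_nonneg j)
    simp_rw [hpt, Finset.sum_add_distrib, ← Finset.mul_sum, ← Finset.sum_mul, s₁, s₂,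
      mul_one, one_mul]
  rw [vnEntropy, vnEntropy, vnEntropy, show eigs M₁ = e₁ from dif_pos hH₁,
    show eigs M₂ = e₂ from dif_pos hH₂]
  rw [show ∑ p : n × m, eigs (Matrix.kroneckerMap (· * ·) M₁ M₂) p
        * Real.log (eigs (Matrix.kroneckerMap (· * ·) M₁ M₂) p)
      = ∑ p : n × m, (e₁ p.1 * e₂ p.2) * Real.log (e₁ p.1 * e₂ p.2) from hsum, key]
  ring

end EoFAux
end AuxLemmas

section AuxLemmas2
open Matrix

set_option linter.unusedSectionVars false
set_option maxHeartbeats 1000000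

namespace EoFAux

variable {n m n' m' : Type*} [Fintype n] [DecidableEq n] [Fintype m] [DecidableEq m]
  [Fintype n'] [DecidableEq n'] [Fintype m'] [DecidableEq m']

lemma trB_proj_posSemidef (ψ : n × m → ℂ) : (trB (proj ψ)).PosSemidef := by
  have h : trB (proj ψ) = (Matrix.of fun i k => ψ (i, k)) * (Matrix.of fun i k => ψ (i, k))ᴴ := by
    ext i j
    simp [trB, proj, Matrix.mul_apply, Matrix.vecMulVec_apply, Matrix.conjTranspose_apply]
  rw [h]
  exact Matrix.posSemidef_self_mul_conjTranspose _

lemma trB_proj_trace {ψ : n × m → ℂ} (hψ : UnitVector ψ) : (trB (proj ψ)).trace = 1 := by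
  have : (trB (proj ψ)).trace = ((∑ x : n × m, Complex.normSq (ψ x) : ℝ) : ℂ) := by
    rw [Matrix.trace]
    push_cast
    rw [Fintype.sum_prod_type]
    apply Finset.sum_congr rfl
    intro i _
    apply Finset.sum_congr rfl
    intro k _
    simp [Matrix.diag, trB, proj, Matrix.vecMulVec_apply, Complex.mul_conj]
  rw [this, hψ]
  norm_num

/-- The tensor product of two vectors, with the (A₁A₂ | B₁B₂) index convention. -/
def tensVec (f : n × m → ℂ) (g : n' × m' → ℂ) : (n × n') × (m × m') → ℂ :=
  fun s => f (s.1.1, s.2.1) * g (s.1.2, s.2.2)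

lemma unitVector_tensVec {f : n × m → ℂ} {g : n' × m' → ℂ}
    (hf : UnitVector f) (hg : UnitVector g) : UnitVector (tensVec f g) := by
  unfold UnitVector tensVec
  rw [show ∑ s : (n × n') × (m × m'),
        Complex.normSq (f (s.1.1, s.2.1) * g (s.1.2, s.2.2))
      = ∑ t : (n × m) × (n' × m'), Complex.normSq (f t.1 * g t.2) from
    Fintype.sum_equiv (Equiv.prodProdProdComm n n' m m') _ _ (fun s => rfl)]
  simp_rw [Complex.normSq_mul]
  rw [Fintype.sum_prod_type]
  show ∑ x : n × m, ∑ y : n' × m', Complex.normSq (f x) * Complex.normSq (g y) = 1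
  rw [← Finset.sum_mul_sum]
  rw [show ∑ t : n × m, Complex.normSq (f t) = 1 from hf,
    show ∑ t : n' × m', Complex.normSq (g t) = 1 from hg]
  norm_num

lemma trB_proj_tensVec (f : n × m → ℂ) (g : n' × m' → ℂ) :
    trB (proj (tensVec f g))
      = Matrix.kroneckerMap (· * ·) (trB (proj f)) (trB (proj g)) := by
  ext ⟨x, y⟩ ⟨x', y'⟩
  show ∑ w : m × m', _ = _
  rw [Fintype.sum_prod_type]
  show ∑ u, ∑ v, proj (tensVec f g) ((x, y), (u, v)) ((x', y'), (u, v))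
      = trB (proj f) x x' * trB (proj g) y y'
  rw [show trB (proj f) x x' = ∑ u, proj f (x, u) (x', u) from rfl,
    show trB (proj g) y y' = ∑ v, proj g (y, v) (y', v) from rfl, Finset.sum_mul_sum]
  apply Finset.sum_congr rfl
  intro u _
  apply Finset.sum_congr rfl
  intro v _
  simp only [proj, tensVec, Matrix.vecMulVec_apply, Pi.star_apply, star_mul']
  ring

lemma exists_pure_ensemble {γ : Type*} [Fintype γ] [DecidableEq γ] {ρ : Matrix γ γ ℂ}
    (h : IsState ρ) :
    ∃ (N : ℕ) (p : Fin N → ℝ) (ψ : Fin N → (γ → ℂ)),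
      (∀ i, 0 ≤ p i) ∧ ∑ i, p i = 1 ∧ (∀ i, UnitVector (ψ i)) ∧ ∑ i, p i • proj (ψ i) = ρ := by
  obtain ⟨hpsd, htr⟩ := h
  have hH := hpsd.1
  set E := Fintype.equivFin γ with hE
  set U := (hH.eigenvectorUnitary : Matrix γ γ ℂ) with hU
  refine ⟨Fintype.card γ, fun k => hH.eigenvalues (E.symm k),
    fun k x => U x (E.symm k), ?_, ?_, ?_, ?_⟩
  · intro k
    exact hpsd.eigenvalues_nonneg _
  · rw [Equiv.sum_comp E.symm hH.eigenvalues]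
    exact sum_eigs_eq_one hH htr
  · intro k
    have hu : star U * U = 1 := Unitary.coe_star_mul_self _
    have h1 := congrFun (congrFun hu (E.symm k)) (E.symm k)
    rw [Matrix.mul_apply] at h1
    have h2 : (1 : Matrix γ γ ℂ) (E.symm k) (E.symm k) = 1 := Matrix.one_apply_eq _
    rw [h2] at h1
    have h3 : ∑ x, ((Complex.normSq (U x (E.symm k)) : ℝ) : ℂ) = 1 := by
      rw [← h1]
      apply Finset.sum_congr rfl
      intro x _
      simp [Matrix.star_apply, Complex.star_def, Complex.normSq_eq_conj_mul_self]
    unfold UnitVector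
    exact_mod_cast (by push_cast at h3 ⊢; exact_mod_cast h3 : ((∑ x, Complex.normSq (U x (E.symm k)) : ℝ) : ℂ) = 1)
  · ext x y
    rw [Matrix.sum_apply]
    have hterm : ∀ k, (hH.eigenvalues (E.symm k) • proj (fun x => U x (E.symm k))) x y
        = U x (E.symm k) * (hH.eigenvalues (E.symm k) : ℂ) * star (U y (E.symm k)) := by
      intro k
      simp only [Matrix.smul_apply, proj, Matrix.vecMulVec_apply, Pi.star_apply,
        Complex.real_smul]
      ring
    simp_rw [hterm]
    rw [Equiv.sum_comp E.symm (fun j => U x j * (hH.eigenvalues j : ℂ) * star (U y j))]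
    conv_rhs => rw [hH.spectral_theorem, Unitary.conjStarAlgAut_apply]
    rw [Matrix.mul_apply]
    apply Finset.sum_congr rfl
    intro j _
    rw [Matrix.mul_diagonal]
    rfl

lemma ensemble_value_nonneg {γ δ : Type*} [Fintype γ] [DecidableEq γ] [Fintype δ] [DecidableEq δ]
    {N : ℕ} {p : Fin N → ℝ} {ψ : Fin N → (γ × δ → ℂ)}
    (hp : ∀ i, 0 ≤ p i) (hu : ∀ i, UnitVector (ψ i)) :
    0 ≤ ∑ i, p i * vnEntropy (trB (proj (ψ i))) := by
  apply Finset.sum_nonneg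
  intro i _
  exact mul_nonneg (hp i) (vnEntropy_nonneg (trB_proj_posSemidef _) (trB_proj_trace (hu i)))

end EoFAux
end AuxLemmas2

section AuxLemmas3
open Matrix

set_option linter.unusedSectionVars false
set_option maxHeartbeats 1000000

namespace EoFAux

lemma EoF_le {γ δ : Type*} [Fintype γ] [DecidableEq γ] [Fintype δ] [DecidableEq δ]
    {σ : Matrix (γ × δ) (γ × δ) ℂ} {x : ℝ}
    (hx : ∃ (N : ℕ) (p : Fin N → ℝ) (ψ : Fin N → (γ × δ → ℂ)),
      (∀ i, 0 ≤ p i) ∧ ∑ i, p i = 1 ∧ (∀ i, UnitVector (ψ i)) ∧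
      ∑ i, p i • proj (ψ i) = σ ∧ x = ∑ i, p i * vnEntropy (trB (proj (ψ i)))) :
    EoF σ ≤ x := by
  refine csInf_le ⟨(0 : ℝ), ?_⟩ hx
  rintro y ⟨N, p, ψ, hp, hs, hu, hr, rfl⟩
  exact ensemble_value_nonneg hp hu

lemma le_EoF {γ δ : Type*} [Fintype γ] [DecidableEq γ] [Fintype δ] [DecidableEq δ]
    {σ : Matrix (γ × δ) (γ × δ) ℂ} (hσ : IsState σ) {c : ℝ}
    (hc : ∀ (N : ℕ) (p : Fin N → ℝ) (ψ : Fin N → (γ × δ → ℂ)),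
      (∀ i, 0 ≤ p i) → ∑ i, p i = 1 → (∀ i, UnitVector (ψ i)) →
      ∑ i, p i • proj (ψ i) = σ → c ≤ ∑ i, p i * vnEntropy (trB (proj (ψ i)))) :
    c ≤ EoF σ := by
  obtain ⟨N, p, ψ, hp, hs, hu, hr⟩ := exists_pure_ensemble hσ
  refine le_csInf ⟨∑ i, p i * vnEntropy (trB (proj (ψ i))), N, p, ψ, hp, hs, hu, hr, rfl⟩ ?_
  rintro x ⟨N', p', ψ', hp', hs', hu', hr', rfl⟩
  exact hc N' p' ψ' hp' hs' hu' hr'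

lemma tensor_step
    {γ₁ δ₁ γ₂ δ₂ : Type*} [Fintype γ₁] [DecidableEq γ₁] [Fintype δ₁] [DecidableEq δ₁]
    [Fintype γ₂] [DecidableEq γ₂] [Fintype δ₂] [DecidableEq δ₂]
    {ρ₁ : Matrix (γ₁ × δ₁) (γ₁ × δ₁) ℂ} {ρ₂ : Matrix (γ₂ × δ₂) (γ₂ × δ₂) ℂ}
    {N₁ N₂ : ℕ} {p₁ : Fin N₁ → ℝ} {p₂ : Fin N₂ → ℝ}
    {ψ₁ : Fin N₁ → (γ₁ × δ₁ → ℂ)} {ψ₂ : Fin N₂ → (γ₂ × δ₂ → ℂ)}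
    (hp₁ : ∀ i, 0 ≤ p₁ i) (hs₁ : ∑ i, p₁ i = 1) (hu₁ : ∀ i, UnitVector (ψ₁ i))
    (hr₁ : ∑ i, p₁ i • proj (ψ₁ i) = ρ₁)
    (hp₂ : ∀ i, 0 ≤ p₂ i) (hs₂ : ∑ i, p₂ i = 1) (hu₂ : ∀ i, UnitVector (ψ₂ i))
    (hr₂ : ∑ i, p₂ i • proj (ψ₂ i) = ρ₂) :
    ∃ (N : ℕ) (p : Fin N → ℝ) (ψ : Fin N → ((γ₁ × γ₂) × (δ₁ × δ₂) → ℂ)),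
      (∀ i, 0 ≤ p i) ∧ ∑ i, p i = 1 ∧ (∀ i, UnitVector (ψ i)) ∧
      ∑ i, p i • proj (ψ i) = (Matrix.kroneckerMap (· * ·) ρ₁ ρ₂).submatrix
          (Equiv.prodProdProdComm γ₁ δ₁ γ₂ δ₂).symm (Equiv.prodProdProdComm γ₁ δ₁ γ₂ δ₂).symm ∧
      (∑ i, p₁ i * vnEntropy (trB (proj (ψ₁ i))))
          + (∑ j, p₂ j * vnEntropy (trB (proj (ψ₂ j))))
        = ∑ i, p i * vnEntropy (trB (proj (ψ i))) := by
  refine ⟨N₁ * N₂,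
    fun k => p₁ (finProdFinEquiv.symm k).1 * p₂ (finProdFinEquiv.symm k).2,
    fun k => tensVec (ψ₁ (finProdFinEquiv.symm k).1) (ψ₂ (finProdFinEquiv.symm k).2),
    fun k => mul_nonneg (hp₁ _) (hp₂ _), ?_,
    fun k => unitVector_tensVec (hu₁ _) (hu₂ _), ?_, ?_⟩
  · refine Eq.trans (Fintype.sum_equiv finProdFinEquiv.symm _
      (fun q : Fin N₁ × Fin N₂ => p₁ q.1 * p₂ q.2) (fun k => rfl)) ?_
    rw [Fintype.sum_prod_type]
    show ∑ i, ∑ j, p₁ i * p₂ j = 1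
    rw [← Finset.sum_mul_sum, hs₁, hs₂, one_mul]
  · ext ⟨⟨x, y⟩, u, v⟩ ⟨⟨x', y'⟩, u', v'⟩
    rw [Matrix.sum_apply]
    refine Eq.trans (Fintype.sum_equiv finProdFinEquiv.symm _
      (fun q : Fin N₁ × Fin N₂ =>
        ((p₁ q.1 * p₂ q.2) • proj (tensVec (ψ₁ q.1) (ψ₂ q.2))) ((x, y), (u, v))
          ((x', y'), (u', v'))) (fun k => rfl)) ?_
    rw [Matrix.submatrix_apply]
    rw [show (Equiv.prodProdProdComm γ₁ δ₁ γ₂ δ₂).symm ((x, y), (u, v)) = ((x, u), (y, v))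
      from rfl]
    rw [show (Equiv.prodProdProdComm γ₁ δ₁ γ₂ δ₂).symm ((x', y'), (u', v')) = ((x', u'), (y', v'))
      from rfl]
    rw [Matrix.kroneckerMap_apply, ← hr₁, ← hr₂, Matrix.sum_apply, Matrix.sum_apply,
      Finset.sum_mul_sum, Fintype.sum_prod_type]
    refine Finset.sum_congr rfl (fun i _ => Finset.sum_congr rfl (fun j _ => ?_))
    simp only [Matrix.smul_apply, proj, Matrix.vecMulVec_apply, Pi.star_apply, tensVec,
      Complex.real_smul, star_mul', Complex.ofReal_mul]
    ring
  · have hE : ∀ (i : Fin N₁) (j : Fin N₂),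
        vnEntropy (trB (proj (tensVec (ψ₁ i) (ψ₂ j))))
          = vnEntropy (trB (proj (ψ₁ i))) + vnEntropy (trB (proj (ψ₂ j))) := fun i j => by
      rw [trB_proj_tensVec]
      exact vnEntropy_kron (trB_proj_posSemidef _) (trB_proj_posSemidef _)
        (trB_proj_trace (hu₁ i)) (trB_proj_trace (hu₂ j))
    refine Eq.trans ?_ (Fintype.sum_equiv finProdFinEquiv.symm _
      (fun q : Fin N₁ × Fin N₂ =>
        (p₁ q.1 * p₂ q.2) * vnEntropy (trB (proj (tensVec (ψ₁ q.1) (ψ₂ q.2)))))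
      (fun k => rfl)).symm
    rw [Fintype.sum_prod_type]
    show _ = ∑ i, ∑ j, (p₁ i * p₂ j) * vnEntropy (trB (proj (tensVec (ψ₁ i) (ψ₂ j))))
    simp_rw [hE]
    have hpt : ∀ (i : Fin N₁) (j : Fin N₂),
        (p₁ i * p₂ j) * (vnEntropy (trB (proj (ψ₁ i))) + vnEntropy (trB (proj (ψ₂ j))))
          = (p₁ i * vnEntropy (trB (proj (ψ₁ i)))) * p₂ j
            + p₁ i * (p₂ j * vnEntropy (trB (proj (ψ₂ j)))) := fun i j => by ring
    simp_rw [hpt, Finset.sum_add_distrib, ← Finset.mul_sum, ← Finset.sum_mul, hs₁, hs₂,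
      mul_one, one_mul]

end EoFAux
end AuxLemmas3


open EoFAux in
/-- Subadditivity of the entanglement of formation:
E_F(ρ₁ ⊗ ρ₂) ≤ E_F(ρ₁) + E_F(ρ₂), where ρ₁ ⊗ ρ₂ is regarded as bipartite
with respect to the partition (A₁A₂ | B₁B₂). -/
theorem eof_subadditive {a₁ b₁ a₂ b₂ : ℕ}
    (ha₁ : 0 < a₁) (hb₁ : 0 < b₁) (ha₂ : 0 < a₂) (hb₂ : 0 < b₂)
    (ρ₁ : Matrix (Fin a₁ × Fin b₁) (Fin a₁ × Fin b₁) ℂ)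
    (ρ₂ : Matrix (Fin a₂ × Fin b₂) (Fin a₂ × Fin b₂) ℂ)
    (h₁ : IsState ρ₁) (h₂ : IsState ρ₂) :
    EoF ((ρ₁ ⊗ₖ ρ₂).submatrix (Equiv.prodProdProdComm (Fin a₁) (Fin b₁) (Fin a₂) (Fin b₂)).symm
        (Equiv.prodProdProdComm (Fin a₁) (Fin b₁) (Fin a₂) (Fin b₂)).symm)
      ≤ EoF ρ₁ + EoF ρ₂ := by
  set σ := (ρ₁ ⊗ₖ ρ₂).submatrix (Equiv.prodProdProdComm (Fin a₁) (Fin b₁) (Fin a₂) (Fin b₂)).symm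
    (Equiv.prodProdProdComm (Fin a₁) (Fin b₁) (Fin a₂) (Fin b₂)).symm with hσ
  have H : EoF σ - EoF ρ₁ ≤ EoF ρ₂ := by
    refine le_EoF h₂ (fun N₂ p₂ ψ₂ hp₂ hs₂ hu₂ hr₂ => ?_)
    have h1 : EoF σ - (∑ j, p₂ j * vnEntropy (trB (proj (ψ₂ j)))) ≤ EoF ρ₁ := by
      refine le_EoF h₁ (fun N₁ p₁ ψ₁ hp₁ hs₁ hu₁ hr₁ => ?_)
      obtain ⟨N, p, ψ, hp, hs, hu, hr, hval⟩ :=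
        tensor_step hp₁ hs₁ hu₁ hr₁ hp₂ hs₂ hu₂ hr₂
      have hle : EoF σ ≤ (∑ i, p₁ i * vnEntropy (trB (proj (ψ₁ i))))
          + (∑ j, p₂ j * vnEntropy (trB (proj (ψ₂ j)))) :=
        EoF_le ⟨N, p, ψ, hp, hs, hu, hr, hval⟩
      linarith
    linarith
  linarith
end

section
/- If X' is optimal for τ in f̂(τ) = max_X (Tr[τX] - f*(X)) and {(p_i, τ_i)} is an optimal ensemble realizing f̂(τ) = Σ p_i f(τ_i) with all p_i > 0, then every τ_i achieves the maximum in f*(X') = max_ρ (Tr[ρX'] - f(ρ)). -/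
open scoped Kronecker ComplexOrder

lemma entry_bound {n : ℕ} (ρ : Matrix (Fin n) (Fin n) ℂ) (h : IsState ρ) (i j : Fin n) :
    ‖ρ i j‖ ≤ 1 := by
  obtain ⟨hpsd, htr⟩ := h
  obtain ⟨B, hB⟩ : ∃ B : Matrix (Fin n) (Fin n) ℂ, ρ = B.conjTranspose * B := by
    open scoped MatrixOrder Matrix.Norms.L2Operator in
    exact CStarAlgebra.nonneg_iff_eq_star_mul_self.mp (Matrix.nonneg_iff_posSemidef.mpr hpsd)
  have key : ∀ z : ℂ, star z * z = ((‖z‖ ^ 2 : ℝ) : ℂ) := by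
    intro z
    rw [Complex.star_def, ← Complex.normSq_eq_conj_mul_self,
      Complex.sq_norm]
  have hdiag : ∀ k, ρ k k = ((∑ m, ‖B m k‖ ^ 2 : ℝ) : ℂ) := by
    intro k
    rw [hB, Complex.ofReal_sum]
    simp only [Matrix.mul_apply, Matrix.conjTranspose_apply]
    exact Finset.sum_congr rfl fun m _ => key _
  have hsum : ∑ k, (∑ m, ‖B m k‖ ^ 2 : ℝ) = 1 := by
    have h1 : ρ.trace = ((∑ k, ∑ m, ‖B m k‖ ^ 2 : ℝ) : ℂ) := by
      rw [Matrix.trace, Complex.ofReal_sum]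
      exact Finset.sum_congr rfl fun k _ => hdiag k
    rw [htr] at h1
    exact_mod_cast h1.symm
  have hle : ∀ k, (∑ m, ‖B m k‖ ^ 2 : ℝ) ≤ 1 := by
    intro k
    rw [← hsum]
    exact Finset.single_le_sum (f := fun k => (∑ m, ‖B m k‖ ^ 2 : ℝ)) (fun k _ => Finset.sum_nonneg fun m _ => sq_nonneg _)
      (Finset.mem_univ k)
  have hij : ρ i j = ∑ m, star (B m i) * B m j := by
    rw [hB]; simp [Matrix.mul_apply, Matrix.conjTranspose_apply]
  rw [hij]
  calc ‖∑ m, star (B m i) * B m j‖ ≤ ∑ m, ‖star (B m i) * B m j‖ := norm_sum_le _ _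
    _ = ∑ m, ‖B m i‖ * ‖B m j‖ := by simp [norm_mul]
    _ ≤ ∑ m, (‖B m i‖ ^ 2 + ‖B m j‖ ^ 2) / 2 := by
        refine Finset.sum_le_sum fun m _ => ?_
        have := two_mul_le_add_sq ‖B m i‖ ‖B m j‖
        linarith
    _ = ((∑ m, ‖B m i‖ ^ 2) + (∑ m, ‖B m j‖ ^ 2)) / 2 := by
        rw [← Finset.sum_add_distrib, Finset.sum_div]
    _ ≤ 1 := by linarith [hle i, hle j]

lemma trace_bound {n : ℕ} (ρ X : Matrix (Fin n) (Fin n) ℂ) (h : IsState ρ) :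
    (ρ * X).trace.re ≤ ∑ i, ∑ j, ‖X j i‖ := by
  have h1 : (ρ * X).trace.re ≤ ‖(ρ * X).trace‖ := Complex.re_le_norm _
  refine h1.trans ?_
  rw [Matrix.trace]
  refine (norm_sum_le _ _).trans ?_
  refine Finset.sum_le_sum fun i _ => ?_
  simp only [Matrix.diag_apply, Matrix.mul_apply]
  refine (norm_sum_le _ _).trans ?_
  refine Finset.sum_le_sum fun j _ => ?_
  rw [norm_mul]
  calc ‖ρ i j‖ * ‖X j i‖ ≤ 1 * ‖X j i‖ :=
        mul_le_mul_of_nonneg_right (entry_bound ρ h i j) (norm_nonneg _)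
    _ = ‖X j i‖ := one_mul _


/-- If X' is optimal for τ in f̂(τ) = max_X (Tr[τX] - f*(X)) and
{(pᵢ, τᵢ)} is an optimal ensemble realizing f̂(τ) = Σ pᵢ f(τᵢ) with pᵢ > 0, then every
τᵢ achieves the maximum in f*(X') = max_ρ (Tr[ρX'] - f(ρ)). -/
theorem ensemble_members_optimal {n : ℕ} (hn : 0 < n)
    (f : Matrix (Fin n) (Fin n) ℂ → ℝ) (hf : BoundedOnStates f)
    (τ : Matrix (Fin n) (Fin n) ℂ) (hτ : IsState τ)
    (X' : Matrix (Fin n) (Fin n) ℂ) (hX' : X'.IsHermitian)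
    (hopt : ∀ X : Matrix (Fin n) (Fin n) ℂ, X.IsHermitian →
      (τ * X).trace.re - conjF f X ≤ (τ * X').trace.re - conjF f X')
    (N : ℕ) (p : Fin N → ℝ) (σ : Fin N → Matrix (Fin n) (Fin n) ℂ)
    (hp : ∀ i, 0 < p i) (hp1 : ∑ i, p i = 1) (hσ : ∀ i, IsState (σ i))
    (hens : ∑ i, p i • σ i = τ)
    (hreal : ∑ i, p i * f (σ i) = cclF f τ) :
    ∀ i, ∀ ρ : Matrix (Fin n) (Fin n) ℂ, IsState ρ →
      (ρ * X').trace.re - f ρ ≤ (σ i * X').trace.re - f (σ i) := by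
  obtain ⟨C, hC⟩ := hf
  -- conjF bound
  have hSbdd : BddAbove {x | ∃ ρ, IsState ρ ∧ x = (ρ * X').trace.re - f ρ} := by
    refine ⟨(∑ i, ∑ j, ‖X' j i‖) + C, ?_⟩
    rintro x ⟨ρ, hρ, rfl⟩
    have h1 := trace_bound ρ X' hρ
    have h2 := (abs_le.mp (hC ρ hρ)).1
    linarith
  have h1 : ∀ ρ, IsState ρ → (ρ * X').trace.re - f ρ ≤ conjF f X' := by
    intro ρ hρ
    exact le_csSup hSbdd ⟨ρ, hρ, rfl⟩
  -- cclF equals value at X'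
  have hTbdd : BddAbove {x | ∃ X : Matrix (Fin n) (Fin n) ℂ, X.IsHermitian ∧
      x = (τ * X).trace.re - conjF f X} := by
    refine ⟨(τ * X').trace.re - conjF f X', ?_⟩
    rintro x ⟨X, hX, rfl⟩
    exact hopt X hX
  have hccl_le : cclF f τ ≤ (τ * X').trace.re - conjF f X' := by
    refine csSup_le ⟨(τ * 0).trace.re - conjF f 0, 0, Matrix.isHermitian_zero, rfl⟩ ?_
    rintro x ⟨X, hX, rfl⟩
    exact hopt X hX
  have hccl_ge : (τ * X').trace.re - conjF f X' ≤ cclF f τ :=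
    le_csSup hTbdd ⟨X', hX', rfl⟩
  have hccl : cclF f τ = (τ * X').trace.re - conjF f X' := le_antisymm hccl_le hccl_ge
  -- trace linearity over the ensemble
  have htr : ∑ i, p i * (σ i * X').trace.re = (τ * X').trace.re := by
    rw [← hens, Finset.sum_mul _ _ X', Matrix.trace_sum]
    rw [Complex.re_sum]
    refine Finset.sum_congr rfl fun i _ => ?_
    rw [Matrix.smul_mul, Matrix.trace_smul]
    simp [Complex.real_smul]
  -- sum of terms equals conjF f X'
  have hsum : ∑ i, p i * ((σ i * X').trace.re - f (σ i)) = conjF f X' := by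
    have : ∑ i, p i * ((σ i * X').trace.re - f (σ i))
        = (∑ i, p i * (σ i * X').trace.re) - ∑ i, p i * f (σ i) := by
      rw [← Finset.sum_sub_distrib]
      exact Finset.sum_congr rfl fun i _ => by ring
    rw [this, htr, hreal, hccl]
    ring
  -- each term equals conjF f X'
  have heach : ∀ i, (σ i * X').trace.re - f (σ i) = conjF f X' := by
    have hzero : ∑ i, p i * (conjF f X' - ((σ i * X').trace.re - f (σ i))) = 0 := by
      rw [Finset.sum_congr rfl fun i _ => mul_sub (p i) _ _, Finset.sum_sub_distrib,
        hsum, ← Finset.sum_mul, hp1, one_mul, sub_self]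
    intro i
    have hnn : ∀ j ∈ Finset.univ, 0 ≤ p j * (conjF f X' - ((σ j * X').trace.re - f (σ j))) :=
      fun j _ => mul_nonneg (hp j).le (sub_nonneg.mpr (h1 (σ j) (hσ j)))
    have := (Finset.sum_eq_zero_iff_of_nonneg hnn).mp hzero i (Finset.mem_univ i)
    rcases mul_eq_zero.mp this with h | h
    · exact absurd h (hp i).ne'
    · linarith [sub_eq_zero.mp h]
  intro i ρ hρ
  exact (h1 ρ hρ).trans (heach i).ge
end

section
/- Subadditivity of the conjugate with respect to Kronecker sums, f*(X₁ ⊠ I + I ⊠ X₂) ≤ f*(X₁) + f*(X₂) for all Hermitian X₁, X₂, implies strong superadditivity of the convex closure: f̂(ρ) ≥ f̂(ρ_I) + f̂(ρ_II) for every state ρ on H ⊗ H with reductions ρ_I, ρ_II. -/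
open scoped Kronecker ComplexOrder

section AuxLemmas
open scoped Kronecker
variable {α β : Type*} [Fintype α] [DecidableEq α] [Fintype β] [DecidableEq β]

theorem entry_bd {ρ : Matrix α α ℂ} (h : IsState ρ) (i j : α) : ‖ρ i j‖ ≤ 1 := by
  obtain ⟨B, hB⟩ : ∃ B : Matrix α α ℂ, ρ = B.conjTranspose * B := by
    open scoped MatrixOrder in exact CStarAlgebra.nonneg_iff_eq_star_mul_self.mp h.1.nonneg
  have hd : ∀ a b : α, ρ a b = ∑ k, (starRingEnd ℂ) (B k a) * B k b := by
    intro a b; rw [hB, Matrix.mul_apply]; simp [Matrix.conjTranspose_apply]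
  set d : α → ℝ := fun a => ∑ k, ‖B k a‖ ^ 2 with hdd
  have hdiag : ∀ a, (ρ a a).re = d a := by
    intro a
    rw [hd a a]
    simp only [Complex.re_sum]
    refine Finset.sum_congr rfl fun k _ => ?_
    rw [mul_comm, Complex.mul_conj']
    rw [← Complex.ofReal_pow, Complex.ofReal_re]
  have hdnn : ∀ a, 0 ≤ d a := fun a => Finset.sum_nonneg fun k _ => sq_nonneg _
  have htr : ∑ a, d a = 1 := by
    have h1 : (ρ.trace).re = 1 := by rw [h.2]; simp
    rw [Matrix.trace] at h1
    simp only [Complex.re_sum] at h1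
    rw [← h1]
    exact Finset.sum_congr rfl fun a _ => (hdiag a).symm
  have hle1 : ∀ a, d a ≤ 1 := by
    intro a
    rw [← htr]
    exact Finset.single_le_sum (fun b _ => hdnn b) (Finset.mem_univ a)
  calc ‖ρ i j‖ ≤ ∑ k, ‖B k i‖ * ‖B k j‖ := by
        rw [hd i j]
        refine (norm_sum_le _ _).trans_eq ?_
        exact Finset.sum_congr rfl fun k _ => by simp
    _ ≤ 1 := by
        have hcs := Finset.sum_mul_sq_le_sq_mul_sq Finset.univ
          (fun k => ‖B k i‖) (fun k => ‖B k j‖)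
        have h1 : (∑ k, ‖B k i‖ * ‖B k j‖)^2 ≤ d i * d j := hcs
        nlinarith [Finset.sum_nonneg (fun k (_ : k ∈ Finset.univ) =>
          mul_nonneg (norm_nonneg (B k i)) (norm_nonneg (B k j))),
          hdnn i, hdnn j, hle1 i, hle1 j]

theorem traceRe_le {ρ : Matrix α α ℂ} (X : Matrix α α ℂ) (h : IsState ρ) :
    (ρ * X).trace.re ≤ ∑ i, ∑ j, ‖X j i‖ := by
  refine (Complex.re_le_norm _).trans ?_
  rw [Matrix.trace]
  refine (norm_sum_le _ _).trans ?_
  refine Finset.sum_le_sum fun i _ => ?_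
  rw [Matrix.diag_apply, Matrix.mul_apply]
  refine (norm_sum_le _ _).trans ?_
  refine Finset.sum_le_sum fun j _ => ?_
  rw [norm_mul]
  calc ‖ρ i j‖ * ‖X j i‖ ≤ 1 * ‖X j i‖ :=
        mul_le_mul_of_nonneg_right (entry_bd h i j) (norm_nonneg _)
    _ = _ := one_mul _

theorem conjF_bdd {g : Matrix α α ℂ → ℝ} {C : ℝ} (hg : ∀ ρ, IsState ρ → |g ρ| ≤ C)
    (X : Matrix α α ℂ) :
    BddAbove {x | ∃ ρ, IsState ρ ∧ x = (ρ * X).trace.re - g ρ} := by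
  refine ⟨(∑ i, ∑ j, ‖X j i‖) + C, ?_⟩
  rintro x ⟨ρ, hρ, rfl⟩
  have h1 := traceRe_le X hρ
  have h2 := (abs_le.mp (hg ρ hρ)).1
  linarith

theorem conjF_ge {g : Matrix α α ℂ → ℝ} {C : ℝ} (hg : ∀ ρ, IsState ρ → |g ρ| ≤ C)
    {σ : Matrix α α ℂ} (hσ : IsState σ) (X : Matrix α α ℂ) :
    (σ * X).trace.re - g σ ≤ conjF g X :=
  le_csSup (conjF_bdd hg X) ⟨σ, hσ, rfl⟩

theorem trace_kron_left' (ρ : Matrix (α × β) (α × β) ℂ) (X : Matrix α α ℂ) :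
    (ρ * (X ⊗ₖ (1 : Matrix β β ℂ))).trace = (trB ρ * X).trace := by
  simp only [Matrix.trace, Matrix.diag, Matrix.mul_apply, trB, Matrix.kroneckerMap_apply,
    Matrix.one_apply, Fintype.sum_prod_type, mul_ite, mul_one, mul_zero, Finset.sum_ite_eq',
    Finset.mem_univ, if_true, Finset.sum_mul]
  exact Finset.sum_congr rfl fun a _ => Finset.sum_comm

theorem trace_kron_right' (ρ : Matrix (α × β) (α × β) ℂ) (X : Matrix β β ℂ) :
    (ρ * ((1 : Matrix α α ℂ) ⊗ₖ X)).trace = (trA ρ * X).trace := by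
  simp only [Matrix.trace, Matrix.diag, Matrix.mul_apply, trA, Matrix.kroneckerMap_apply,
    Matrix.one_apply, Fintype.sum_prod_type, ite_mul, one_mul, zero_mul, mul_ite, mul_zero,
    Finset.sum_ite_irrel, Finset.sum_const_zero, Finset.sum_ite_eq', Finset.mem_univ, if_true,
    Finset.sum_mul]
  rw [Finset.sum_comm]
  exact Finset.sum_congr rfl fun b _ => Finset.sum_comm

theorem kron_conjT (A : Matrix α α ℂ) (B : Matrix β β ℂ) :
    (A ⊗ₖ B).conjTranspose = A.conjTranspose ⊗ₖ B.conjTranspose := by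
  ext ⟨a, b⟩ ⟨c, d⟩
  simp [Matrix.conjTranspose_apply, Matrix.kroneckerMap_apply, mul_comm]

theorem kron_one_herm {X : Matrix α α ℂ} (hX : X.IsHermitian) :
    (X ⊗ₖ (1 : Matrix β β ℂ)).IsHermitian := by
  unfold Matrix.IsHermitian
  rw [kron_conjT, hX.eq, Matrix.conjTranspose_one]

theorem one_kron_herm {X : Matrix β β ℂ} (hX : X.IsHermitian) :
    ((1 : Matrix α α ℂ) ⊗ₖ X).IsHermitian := by
  unfold Matrix.IsHermitian
  rw [kron_conjT, hX.eq, Matrix.conjTranspose_one]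

end AuxLemmas

/-- Subadditivity of the conjugate with respect to Kronecker sums implies
strong superadditivity of the convex closure: f̂(ρ) ≥ f̂(ρ_I) + f̂(ρ_II) for every state ρ
on the doubled space with reductions ρ_I = Tr_II ρ and ρ_II = Tr_I ρ. -/
theorem conj_subadd_implies_strong_superadd {n : ℕ} (hn : 0 < n)
    (f : Matrix (Fin n) (Fin n) ℂ → ℝ) (hf : BoundedOnStates f)
    (F : Matrix (Fin n × Fin n) (Fin n × Fin n) ℂ → ℝ) (hF : BoundedOnStates F)
    (hsub : ∀ X₁ X₂ : Matrix (Fin n) (Fin n) ℂ, X₁.IsHermitian → X₂.IsHermitian →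
      conjF F (X₁ ⊗ₖ (1 : Matrix (Fin n) (Fin n) ℂ) + (1 : Matrix (Fin n) (Fin n) ℂ) ⊗ₖ X₂)
        ≤ conjF f X₁ + conjF f X₂) :
    ∀ ρ : Matrix (Fin n × Fin n) (Fin n × Fin n) ℂ, IsState ρ →
      cclF f (trB ρ) + cclF f (trA ρ) ≤ cclF F ρ := by
  intro ρ hρ
  obtain ⟨Cf, hCf⟩ := hf
  obtain ⟨CF, hCF⟩ := hF
  have hbdd : BddAbove {x | ∃ X : Matrix (Fin n × Fin n) (Fin n × Fin n) ℂ,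
      X.IsHermitian ∧ x = (ρ * X).trace.re - conjF F X} := by
    refine ⟨CF, ?_⟩
    rintro x ⟨X, hX, rfl⟩
    have h1 : (ρ * X).trace.re - F ρ ≤ conjF F X := conjF_ge hCF hρ X
    have h2 := (abs_le.mp (hCF ρ hρ)).2
    linarith
  have key : ∀ X₁ X₂ : Matrix (Fin n) (Fin n) ℂ, X₁.IsHermitian → X₂.IsHermitian →
      ((trB ρ * X₁).trace.re - conjF f X₁) + ((trA ρ * X₂).trace.re - conjF f X₂)
        ≤ cclF F ρ := by
    intro X₁ X₂ h1 h2
    set X := X₁ ⊗ₖ (1 : Matrix (Fin n) (Fin n) ℂ) + (1 : Matrix (Fin n) (Fin n) ℂ) ⊗ₖ X₂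
      with hXdef
    have hXh : X.IsHermitian := (kron_one_herm h1).add (one_kron_herm h2)
    have hz : (ρ * X).trace.re - conjF F X ≤ cclF F ρ :=
      le_csSup hbdd ⟨X, hXh, rfl⟩
    have htr : (ρ * X).trace.re = (trB ρ * X₁).trace.re + (trA ρ * X₂).trace.re := by
      rw [hXdef, Matrix.mul_add, Matrix.trace_add, trace_kron_left', trace_kron_right',
        Complex.add_re]
    have hc : conjF F X ≤ conjF f X₁ + conjF f X₂ := hsub X₁ X₂ h1 h2
    linarith
  unfold cclF
  rw [← le_sub_iff_add_le]
  refine csSup_le ⟨_, 0, Matrix.isHermitian_zero, rfl⟩ ?_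
  rintro x ⟨X₁, h1, rfl⟩
  rw [le_sub_comm]
  refine csSup_le ⟨_, 0, Matrix.isHermitian_zero, rfl⟩ ?_
  rintro y ⟨X₂, h2, rfl⟩
  rw [le_sub_iff_add_le, add_comm]
  exact key X₁ X₂ h1 h2
end

section
/- For any positive definite M on H_A ⊗ H_B, max over unit vectors ψ of (⟨ψ| log M |ψ⟩ - S(Tr_A |ψ⟩⟨ψ|)) equals max over full-rank states τ on H_B of λ_max(log M + log(I_A ⊗ τ)), where λ_max denotes the largest eigenvalue. -/
open scoped Kronecker ComplexOrder

namespace Helper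
open Matrix Polynomial
set_option linter.unusedSectionVars false

variable {n m : Type*} [Fintype n] [DecidableEq n] [Fintype m] [DecidableEq m]

lemma conj_pow (U D : Matrix n n ℂ) (hU : U * star U = 1) (hU' : star U * U = 1) (k : ℕ) :
    (U * D * star U) ^ k = U * D ^ k * star U := by
  induction k with
  | zero => simp [hU]
  | succ k ih =>
      have h : star U * (U * (D * star U)) = D * star U := by
        rw [← mul_assoc, hU', one_mul]
      rw [pow_succ, ih, pow_succ]
      simp only [mul_assoc, h]

lemma aeval_conj (U D : Matrix n n ℂ) (hU : U * star U = 1) (hU' : star U * U = 1)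
    (p : Polynomial ℂ) :
    aeval (U * D * star U) p = U * aeval D p * star U := by
  induction p using Polynomial.induction_on' with
  | add p q hp hq => rw [map_add, map_add, hp, hq]; simp only [mul_add, add_mul]
  | monomial k c =>
      rw [aeval_monomial, aeval_monomial, conj_pow U D hU hU' k, ← Algebra.smul_def,
        ← Algebra.smul_def, mul_smul_comm, smul_mul_assoc]

lemma aeval_diagonal (d : n → ℂ) (p : Polynomial ℂ) :
    aeval (Matrix.diagonal d) p = Matrix.diagonal (fun i => p.eval (d i)) := by
  induction p using Polynomial.induction_on' with
  | add p q hp hq =>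
      have h : (fun i => Polynomial.eval (d i) (p + q)) = fun i => p.eval (d i) + q.eval (d i) :=
        funext fun i => eval_add
      rw [map_add, hp, hq, h, diagonal_add]
  | monomial k c =>
      have h : (fun i => Polynomial.eval (d i) (monomial k c)) = c • (d ^ k) := by
        funext i; simp [eval_monomial, smul_eq_mul]
      rw [aeval_monomial, ← Algebra.smul_def, diagonal_pow, h, diagonal_smul]

lemma diag_herm (d : n → ℝ) :
    (Matrix.diagonal (fun i => (d i : ℂ)))ᴴ = Matrix.diagonal (fun i => (d i : ℂ)) := by
  have h : star (fun i => (d i : ℂ)) = fun i => (d i : ℂ) :=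
    funext fun i => Complex.conj_ofReal _
  rw [diagonal_conjTranspose, h]

lemma isHermitian_conj_diag (U : Matrix n n ℂ) (d : n → ℝ) :
    (U * Matrix.diagonal (fun i => (d i : ℂ)) * star U).IsHermitian := by
  show _ᴴ = _
  rw [star_eq_conjTranspose, conjTranspose_mul, conjTranspose_mul, conjTranspose_conjTranspose,
    diag_herm, mul_assoc]

lemma mfun_conj (g : ℝ → ℝ) (U : Matrix n n ℂ) (hU : U * star U = 1) (hU' : star U * U = 1)
    (d : n → ℝ) :
    mfun g (U * Matrix.diagonal (fun i => (d i : ℂ)) * star U)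
      = U * Matrix.diagonal (fun i => (g (d i) : ℂ)) * star U := by
  classical
  set A := U * Matrix.diagonal (fun i => (d i : ℂ)) * star U with hA_def
  have hA : A.IsHermitian := isHermitian_conj_diag U d
  set V : Matrix n n ℂ := (hA.eigenvectorUnitary : Matrix n n ℂ) with hV_def
  have hV : V * star V = 1 := Matrix.mem_unitaryGroup_iff.mp hA.eigenvectorUnitary.2
  have hV' : star V * V = 1 := Matrix.mem_unitaryGroup_iff'.mp hA.eigenvectorUnitary.2
  have hspec : A = V * Matrix.diagonal (fun i => ((hA.eigenvalues i : ℝ) : ℂ)) * star V :=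
    hA.spectral_theorem
  set s : Finset ℂ := (Finset.univ.image fun i => ((d i : ℝ) : ℂ)) ∪
      (Finset.univ.image fun i => ((hA.eigenvalues i : ℝ) : ℂ)) with hs_def
  set v : ℂ → ℂ := fun z => ((g z.re : ℝ) : ℂ) with hv_def
  set p : Polynomial ℂ := Lagrange.interpolate s id v with hp_def
  have hnode : ∀ z ∈ s, p.eval z = v z := by
    intro z hz
    have := Lagrange.eval_interpolate_at_node (s := s) (v := id) (r := v)
      (Set.injOn_id _) hz
    exact this
  have hd : ∀ i, p.eval ((d i : ℝ) : ℂ) = ((g (d i) : ℝ) : ℂ) := by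
    intro i
    rw [hnode _ (Finset.mem_union_left _ (Finset.mem_image_of_mem _ (Finset.mem_univ i)))]
    simp [hv_def]
  have he : ∀ i, p.eval ((hA.eigenvalues i : ℝ) : ℂ) = ((g (hA.eigenvalues i) : ℝ) : ℂ) := by
    intro i
    rw [hnode _ (Finset.mem_union_right _ (Finset.mem_image_of_mem _ (Finset.mem_univ i)))]
    simp [hv_def]
  have h1 : aeval A p = U * Matrix.diagonal (fun i => ((g (d i) : ℝ) : ℂ)) * star U := by
    rw [hA_def, aeval_conj U _ hU hU', aeval_diagonal, funext hd]
  have h2 : aeval A p = mfun g A := by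
    conv_lhs => rw [hspec]
    rw [aeval_conj V _ hV hV', aeval_diagonal, mfun, dif_pos hA, funext he]
  rw [← h2, h1]

end Helper
namespace Helper2
open Matrix Helper
set_option linter.unusedSectionVars false

variable {n : Type*} [Fintype n] [DecidableEq n]

/-- quadratic form of a conjugated diagonal matrix -/
lemma quad_conj_diag (U : Matrix n n ℂ) (e : n → ℂ) (ψ : n → ℂ) :
    star ψ ⬝ᵥ ((U * Matrix.diagonal e * star U) *ᵥ ψ)
      = ∑ i, e i * ((starRingEnd ℂ) ((star U *ᵥ ψ) i) * (star U *ᵥ ψ) i) := by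
  set c : n → ℂ := star U *ᵥ ψ with hc
  have h1 : (U * Matrix.diagonal e * star U) *ᵥ ψ = U *ᵥ (Matrix.diagonal e *ᵥ c) := by
    rw [mulVec_mulVec, mulVec_mulVec, mul_assoc]
  have h2 : star ψ ᵥ* U = star c := by
    rw [hc, star_mulVec, star_eq_conjTranspose, conjTranspose_conjTranspose]
  rw [h1, dotProduct_mulVec, h2, dotProduct]
  refine Finset.sum_congr rfl fun i _ => ?_
  rw [mulVec_diagonal]
  simp [Pi.star_apply, RCLike.star_def]
  ring

/-- norm preservation by unitaries -/
lemma star_mulVec_dot (U : Matrix n n ℂ) (hU : U * star U = 1) (ψ : n → ℂ) :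
    star (star U *ᵥ ψ) ⬝ᵥ (star U *ᵥ ψ) = star ψ ⬝ᵥ ψ := by
  have h2 : star ψ ᵥ* U = star (star U *ᵥ ψ) := by
    rw [star_mulVec, star_eq_conjTranspose, conjTranspose_conjTranspose]
  rw [← h2, ← dotProduct_mulVec, mulVec_mulVec, hU, one_mulVec]

lemma unitVector_iff (ψ : n → ℂ) : UnitVector ψ ↔ star ψ ⬝ᵥ ψ = 1 := by
  have : star ψ ⬝ᵥ ψ = ((∑ i, Complex.normSq (ψ i) : ℝ) : ℂ) := by
    rw [dotProduct, Complex.ofReal_sum]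
    refine Finset.sum_congr rfl fun i _ => ?_
    rw [Complex.normSq_eq_conj_mul_self]
    rfl
  rw [UnitVector, this]
  constructor
  · intro h; rw [h]; norm_num
  · intro h; exact_mod_cast h

lemma eigs_herm {H : Matrix n n ℂ} (hH : H.IsHermitian) : eigs H = hH.eigenvalues := by
  rw [eigs, dif_pos hH]

lemma eigs_le_lmax (H : Matrix n n ℂ) (i : n) : eigs H i ≤ lmax H :=
  le_ciSup (Set.Finite.bddAbove (Set.finite_range _)) i

lemma mlog_herm (M : Matrix n n ℂ) : (mlog M).IsHermitian := by
  rw [mlog, mfun]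
  split
  · next h =>
      have hU : (h.eigenvectorUnitary : Matrix n n ℂ) *
          star (h.eigenvectorUnitary : Matrix n n ℂ) = 1 :=
        Matrix.mem_unitaryGroup_iff.mp h.eigenvectorUnitary.2
      exact isHermitian_conj_diag _ _
  · exact isHermitian_zero

variable [Nonempty n]

lemma rayleigh_le {H : Matrix n n ℂ} (hH : H.IsHermitian) (ψ : n → ℂ)
    (hψ : UnitVector ψ) : (star ψ ⬝ᵥ H *ᵥ ψ).re ≤ lmax H := by
  set V : Matrix n n ℂ := (hH.eigenvectorUnitary : Matrix n n ℂ) with hV_def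
  have hV : V * star V = 1 := Matrix.mem_unitaryGroup_iff.mp hH.eigenvectorUnitary.2
  have hspec : H = V * Matrix.diagonal (fun i => ((hH.eigenvalues i : ℝ) : ℂ)) * star V :=
    hH.spectral_theorem
  set c : n → ℂ := star V *ᵥ ψ with hc
  have hquad : star ψ ⬝ᵥ H *ᵥ ψ
      = ∑ i, ((hH.eigenvalues i : ℝ) : ℂ) * ((starRingEnd ℂ) (c i) * c i) := by
    conv_lhs => rw [hspec]
    exact quad_conj_diag V _ ψ
  have hconj : ∀ i, (starRingEnd ℂ) (c i) * c i = ((Complex.normSq (c i) : ℝ) : ℂ) := by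
    intro i; rw [Complex.normSq_eq_conj_mul_self]
  have hre : (star ψ ⬝ᵥ H *ᵥ ψ).re = ∑ i, hH.eigenvalues i * Complex.normSq (c i) := by
    rw [hquad]
    rw [Complex.re_sum]
    refine Finset.sum_congr rfl fun i _ => ?_
    rw [hconj i, ← Complex.ofReal_mul, Complex.ofReal_re]
  have hnorm : ∑ i, Complex.normSq (c i) = 1 := by
    have h1 : star c ⬝ᵥ c = 1 := by
      rw [hc, star_mulVec_dot V hV ψ, ← unitVector_iff]; exact hψ
    have h2 : star c ⬝ᵥ c = ((∑ i, Complex.normSq (c i) : ℝ) : ℂ) := by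
      rw [dotProduct, Complex.ofReal_sum]
      refine Finset.sum_congr rfl fun i _ => ?_
      rw [Complex.normSq_eq_conj_mul_self]; rfl
    rw [h2] at h1
    exact_mod_cast h1
  rw [hre]
  calc ∑ i, hH.eigenvalues i * Complex.normSq (c i)
      ≤ ∑ i, lmax H * Complex.normSq (c i) := by
        refine Finset.sum_le_sum fun i _ => ?_
        refine mul_le_mul_of_nonneg_right ?_ (Complex.normSq_nonneg _)
        have := eigs_le_lmax H i
        rwa [eigs_herm hH] at this
    _ = lmax H := by rw [← Finset.mul_sum, hnorm, mul_one]

lemma rayleigh_attain {H : Matrix n n ℂ} (hH : H.IsHermitian) :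
    ∃ ψ : n → ℂ, UnitVector ψ ∧ star ψ ⬝ᵥ H *ᵥ ψ = ((lmax H : ℝ) : ℂ) := by
  set V : Matrix n n ℂ := (hH.eigenvectorUnitary : Matrix n n ℂ) with hV_def
  have hV : V * star V = 1 := Matrix.mem_unitaryGroup_iff.mp hH.eigenvectorUnitary.2
  have hV' : star V * V = 1 := Matrix.mem_unitaryGroup_iff'.mp hH.eigenvectorUnitary.2
  have hspec : H = V * Matrix.diagonal (fun i => ((hH.eigenvalues i : ℝ) : ℂ)) * star V :=
    hH.spectral_theorem
  obtain ⟨i0, hi0⟩ := Finite.exists_max hH.eigenvalues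
  have hlmax : lmax H = hH.eigenvalues i0 := by
    apply le_antisymm
    · refine ciSup_le fun i => ?_
      rw [eigs_herm hH]; exact hi0 i
    · have := eigs_le_lmax H i0
      rwa [eigs_herm hH] at this
  refine ⟨V *ᵥ Pi.single i0 1, ?_, ?_⟩
  · rw [unitVector_iff]
    have h2 : star (V *ᵥ Pi.single i0 1) ᵥ* V = star (star V *ᵥ (V *ᵥ Pi.single i0 1)) := by
      rw [star_mulVec (star V), star_eq_conjTranspose, conjTranspose_conjTranspose]
    have h3 : star V *ᵥ (V *ᵥ Pi.single i0 1) = Pi.single i0 1 := by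
      rw [mulVec_mulVec, hV', one_mulVec]
    calc star (V *ᵥ Pi.single i0 1) ⬝ᵥ (V *ᵥ Pi.single i0 1)
        = (star (V *ᵥ Pi.single i0 1) ᵥ* V) ⬝ᵥ Pi.single i0 1 := by
          rw [← dotProduct_mulVec]
      _ = star (Pi.single i0 1) ⬝ᵥ (Pi.single i0 1 : n → ℂ) := by rw [h2, h3]
      _ = 1 := by simp [dotProduct, Pi.single_apply, apply_ite]
  · have hc : star V *ᵥ (V *ᵥ Pi.single i0 1) = Pi.single i0 1 := by
      rw [mulVec_mulVec, hV', one_mulVec]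
    have := quad_conj_diag V (fun i => ((hH.eigenvalues i : ℝ) : ℂ)) (V *ᵥ Pi.single i0 1)
    rw [hc] at this
    conv_lhs => rw [hspec]
    rw [this, hlmax]
    rw [Finset.sum_eq_single i0]
    · simp
    · intro i _ hi; simp [Pi.single_apply, hi]
    · intro h; exact absurd (Finset.mem_univ i0) h

end Helper2
namespace Helper3
open Matrix Helper Helper2
open scoped Kronecker ComplexOrder
set_option linter.unusedSectionVars false

variable {n m : Type*} [Fintype n] [DecidableEq n] [Fintype m] [DecidableEq m]

lemma trace_proj_mul (ψ : n → ℂ) (X : Matrix n n ℂ) :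
    (proj ψ * X).trace = star ψ ⬝ᵥ X *ᵥ ψ := by
  rw [Matrix.trace, dotProduct]
  simp only [Matrix.diag_apply, Matrix.mul_apply, proj, Matrix.vecMulVec_apply,
    Matrix.mulVec, dotProduct, Pi.star_apply, RCLike.star_def]
  rw [Finset.sum_comm]
  refine Finset.sum_congr rfl fun j _ => ?_
  rw [Finset.mul_sum]
  refine Finset.sum_congr rfl fun i _ => by ring

lemma trace_conj (U D : Matrix n n ℂ) (hU' : star U * U = 1) :
    (U * D * star U).trace = D.trace := by
  rw [Matrix.trace_mul_comm, ← mul_assoc, hU', one_mul]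

lemma quad_kron (ψ : n × m → ℂ) (Y : Matrix m m ℂ) :
    star ψ ⬝ᵥ (((1 : Matrix n n ℂ) ⊗ₖ Y) *ᵥ ψ) = (trA (proj ψ) * Y).trace := by
  rw [Matrix.trace, dotProduct]
  simp only [Matrix.diag_apply, Matrix.mul_apply, trA, proj, Matrix.vecMulVec_apply,
    Matrix.mulVec, dotProduct, Pi.star_apply, RCLike.star_def, Matrix.kroneckerMap_apply,
    Matrix.one_apply]
  simp only [Fintype.sum_prod_type, ite_mul, one_mul, zero_mul, mul_ite, mul_zero,
    Finset.mul_sum, Finset.sum_mul, Finset.sum_ite_irrel, Finset.sum_const_zero,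
    Finset.sum_ite_eq, Finset.mem_univ, if_true]
  calc ∑ a : n, ∑ x : m, ∑ y : m, (starRingEnd ℂ) (ψ (a,x)) * (Y x y * ψ (a,y))
      = ∑ a : n, ∑ y : m, ∑ x : m, (starRingEnd ℂ) (ψ (a,x)) * (Y x y * ψ (a,y)) :=
        Finset.sum_congr rfl fun a _ => Finset.sum_comm
    _ = ∑ y : m, ∑ a : n, ∑ x : m, (starRingEnd ℂ) (ψ (a,x)) * (Y x y * ψ (a,y)) :=
        Finset.sum_comm
    _ = ∑ y : m, ∑ x : m, ∑ a : n, (starRingEnd ℂ) (ψ (a,x)) * (Y x y * ψ (a,y)) :=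
        Finset.sum_congr rfl fun y _ => Finset.sum_comm
    _ = ∑ y : m, ∑ x : m, ∑ a : n, ψ (a,y) * (starRingEnd ℂ) (ψ (a,x)) * Y x y :=
        Finset.sum_congr rfl fun y _ => Finset.sum_congr rfl fun x _ =>
          Finset.sum_congr rfl fun a _ => by ring


lemma trA_proj_posSemidef (ψ : n × m → ℂ) : (trA (proj ψ)).PosSemidef := by
  have : trA (proj ψ) = (Matrix.of fun b a => ψ (a, b)) * (Matrix.of fun b a => ψ (a, b))ᴴ := by
    ext b b'
    simp [trA, proj, Matrix.mul_apply, Matrix.vecMulVec_apply, Matrix.conjTranspose_apply,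
      RCLike.star_def]
  rw [this]
  exact Matrix.posSemidef_self_mul_conjTranspose _

lemma trace_trA_proj (ψ : n × m → ℂ) (hψ : UnitVector ψ) : (trA (proj ψ)).trace = 1 := by
  have : (trA (proj ψ)).trace = star ψ ⬝ᵥ ψ := by
    rw [Matrix.trace, dotProduct]
    simp only [Matrix.diag_apply, trA, proj, Matrix.vecMulVec_apply, Pi.star_apply,
      RCLike.star_def]
    rw [Fintype.sum_prod_type, Finset.sum_comm]
    exact Finset.sum_congr rfl fun b _ => Finset.sum_congr rfl fun a _ => by ring
  rw [this, ← unitVector_iff]; exact hψ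

end Helper3
namespace Helper4
open Matrix Helper Helper2 Helper3
open scoped ComplexOrder
set_option linter.unusedSectionVars false

variable {n m : Type*} [Fintype n] [DecidableEq n] [Fintype m] [DecidableEq m]

lemma sum_eigenvalues_eq_one {σ : Matrix n n ℂ} (hσ : σ.IsHermitian) (h1 : σ.trace = 1) :
    ∑ i, hσ.eigenvalues i = 1 := by
  have hV' : star (hσ.eigenvectorUnitary : Matrix n n ℂ) * (hσ.eigenvectorUnitary : Matrix n n ℂ) = 1 :=
    Matrix.mem_unitaryGroup_iff'.mp hσ.eigenvectorUnitary.2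
  have ht : σ.trace = ∑ i, ((hσ.eigenvalues i : ℝ) : ℂ) := by
    conv_lhs => rw [hσ.spectral_theorem]
    rw [Unitary.conjStarAlgAut_apply, trace_conj _ _ hV', Matrix.trace_diagonal]
    simp [Function.comp]
  rw [h1] at ht
  exact_mod_cast ht.symm

lemma scalar_klein (p : n → ℝ) (q : m → ℝ) (w : n → m → ℝ)
    (hp : ∀ k, 0 ≤ p k) (hq : ∀ l, 0 < q l) (hq1 : ∑ l, q l = 1)
    (hw : ∀ k l, 0 ≤ w k l) (hrow : ∀ k, ∑ l, w k l = 1) (hcol : ∀ l, ∑ k, w k l = 1)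
    (hp1 : ∑ k, p k = 1) :
    ∑ k, p k * ∑ l, w k l * Real.log (q l) ≤ ∑ k, p k * Real.log (p k) := by
  have key : ∀ k, p k * ∑ l, w k l * Real.log (q l) - p k * Real.log (p k)
      ≤ (∑ l, w k l * q l) - p k := by
    intro k
    rcases eq_or_lt_of_le (hp k) with h0 | h0
    · rw [← h0]
      simp only [zero_mul, sub_zero, zero_sub, neg_zero, sub_zero]
      have : (0:ℝ) ≤ ∑ l, w k l * q l :=
        Finset.sum_nonneg fun l _ => mul_nonneg (hw k l) (hq l).le
      linarith
    · have hstep : ∀ l, w k l * (Real.log (q l) - Real.log (p k))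
          ≤ w k l * (q l / p k - 1) := by
        intro l
        refine mul_le_mul_of_nonneg_left ?_ (hw k l)
        rw [← Real.log_div (ne_of_gt (hq l)) (ne_of_gt h0)]
        exact Real.log_le_sub_one_of_pos (div_pos (hq l) h0)
      have hsum := Finset.sum_le_sum (s := Finset.univ) (fun l _ => hstep l)
      have hL : ∑ l, w k l * (Real.log (q l) - Real.log (p k))
          = (∑ l, w k l * Real.log (q l)) - Real.log (p k) := by
        simp only [mul_sub, Finset.sum_sub_distrib, ← Finset.sum_mul, hrow k, one_mul]
      have hR : ∑ l, w k l * (q l / p k - 1) = (∑ l, w k l * q l) / p k - 1 := by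
        have e : ∀ l, w k l * (q l / p k - 1) = w k l * q l / p k - w k l := fun l => by ring
        simp only [e, Finset.sum_sub_distrib, hrow k, ← Finset.sum_div]
      rw [hL, hR] at hsum
      have := mul_le_mul_of_nonneg_left hsum (hp k)
      calc p k * ∑ l, w k l * Real.log (q l) - p k * Real.log (p k)
          = p k * ((∑ l, w k l * Real.log (q l)) - Real.log (p k)) := by ring
        _ ≤ p k * ((∑ l, w k l * q l) / p k - 1) := this
        _ = (∑ l, w k l * q l) - p k := by field_simp
  have hsum := Finset.sum_le_sum (fun k (_ : k ∈ Finset.univ) => key k)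
  have htot : ∑ k, ((∑ l, w k l * q l) - p k) = 0 := by
    rw [Finset.sum_sub_distrib, hp1, Finset.sum_comm]
    have : ∑ l, ∑ k, w k l * q l = ∑ l, q l := by
      refine Finset.sum_congr rfl fun l _ => ?_
      rw [← Finset.sum_mul, hcol l, one_mul]
    rw [this, hq1, sub_self]
  rw [Finset.sum_sub_distrib, htot] at hsum
  linarith

lemma trace_diag_conj (U V : Matrix n n ℂ) (hU : U * star U = 1) (hU' : star U * U = 1)
    (aa bb : n → ℂ) :
    ((U * Matrix.diagonal aa * star U) * (V * Matrix.diagonal bb * star V)).trace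
      = ∑ k, ∑ l, aa k * (bb l * ((star U * V) k l * (starRingEnd ℂ) ((star U * V) k l))) := by
  set W : Matrix n n ℂ := star U * V with hW_def
  have hsW : star W = star V * U := by rw [hW_def, StarMul.star_mul, star_star]
  have key : (U * Matrix.diagonal aa * star U) * (V * Matrix.diagonal bb * star V)
      = U * (Matrix.diagonal aa * (W * (Matrix.diagonal bb * star W))) * star U := by
    rw [hsW, hW_def]
    calc (U * Matrix.diagonal aa * star U) * (V * Matrix.diagonal bb * star V)
        = (U * Matrix.diagonal aa * star U) * (V * Matrix.diagonal bb * star V) * 1 := by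
          rw [mul_one]
      _ = (U * Matrix.diagonal aa * star U) * (V * Matrix.diagonal bb * star V) * (U * star U) := by
          rw [hU]
      _ = U * (Matrix.diagonal aa * (star U * V * (Matrix.diagonal bb * (star V * U)))) * star U := by
          simp only [mul_assoc]
  rw [key, trace_conj _ _ hU', Matrix.trace]
  refine Finset.sum_congr rfl fun k _ => ?_
  rw [Matrix.diag_apply, Matrix.diagonal_mul, Matrix.mul_apply, Finset.mul_sum]
  refine Finset.sum_congr rfl fun l _ => ?_
  simp only [Matrix.diagonal_mul, star_eq_conjTranspose, Matrix.conjTranspose_apply,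
    RCLike.star_def]
  ring

end Helper4
namespace Helper5
open Matrix Helper Helper2 Helper3 Helper4
open scoped ComplexOrder
set_option linter.unusedSectionVars false

variable {n m : Type*} [Fintype n] [DecidableEq n] [Fintype m] [DecidableEq m]

lemma klein [Nonempty n] {σ τ : Matrix n n ℂ} (hσ : σ.PosSemidef) (hσ1 : σ.trace = 1)
    (hτ : τ.PosDef) (hτ1 : τ.trace = 1) :
    (σ * mlog τ).trace.re ≤ -vnEntropy σ := by
  set U : Matrix n n ℂ := (hσ.1.eigenvectorUnitary : Matrix n n ℂ) with hU_def
  have hU : U * star U = 1 := Matrix.mem_unitaryGroup_iff.mp hσ.1.eigenvectorUnitary.2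
  have hU' : star U * U = 1 := Matrix.mem_unitaryGroup_iff'.mp hσ.1.eigenvectorUnitary.2
  set V : Matrix n n ℂ := (hτ.1.eigenvectorUnitary : Matrix n n ℂ) with hV_def
  have hVV : V * star V = 1 := Matrix.mem_unitaryGroup_iff.mp hτ.1.eigenvectorUnitary.2
  have hVV' : star V * V = 1 := Matrix.mem_unitaryGroup_iff'.mp hτ.1.eigenvectorUnitary.2
  set p : n → ℝ := hσ.1.eigenvalues with hp_def
  set q : n → ℝ := hτ.1.eigenvalues with hq_def
  have hmlog : mlog τ = V * Matrix.diagonal (fun i => ((Real.log (q i) : ℝ) : ℂ)) * star V := by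
    rw [mlog, mfun, dif_pos hτ.1]
  have hspec : σ = U * Matrix.diagonal (fun i => ((p i : ℝ) : ℂ)) * star U :=
    hσ.1.spectral_theorem
  set W : Matrix n n ℂ := star U * V with hW_def
  have hsW : star W = star V * U := by rw [hW_def, StarMul.star_mul, star_star]
  have htr : (σ * mlog τ).trace
      = ∑ k, ∑ l, ((p k : ℝ) : ℂ) * (((Real.log (q l) : ℝ) : ℂ)
          * (W k l * (starRingEnd ℂ) (W k l))) := by
    conv_lhs => rw [hspec, hmlog]
    exact trace_diag_conj U V hU hU' _ _
  have hre : (σ * mlog τ).trace.re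
      = ∑ k, ∑ l, p k * (Real.log (q l) * Complex.normSq (W k l)) := by
    rw [htr, Complex.re_sum]
    refine Finset.sum_congr rfl fun k _ => ?_
    rw [Complex.re_sum]
    refine Finset.sum_congr rfl fun l _ => ?_
    rw [Complex.mul_conj, ← Complex.ofReal_mul, ← Complex.ofReal_mul, Complex.ofReal_re]
  have hWW : W * star W = 1 := by
    calc W * star W = star U * (V * star V) * U := by rw [hsW, hW_def]; simp only [mul_assoc]
      _ = 1 := by rw [hVV, mul_one, hU']
  have hWW' : star W * W = 1 := by
    calc star W * W = star V * (U * star U) * V := by rw [hsW, hW_def]; simp only [mul_assoc]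
      _ = 1 := by rw [hU, mul_one, hVV']
  have hrow : ∀ k, ∑ l, Complex.normSq (W k l) = 1 := by
    intro k
    have h1 : (W * star W) k k = 1 := by rw [hWW, Matrix.one_apply_eq]
    rw [Matrix.mul_apply] at h1
    have h2 : ∑ l, W k l * (star W) l k = ((∑ l, Complex.normSq (W k l) : ℝ) : ℂ) := by
      rw [Complex.ofReal_sum]
      refine Finset.sum_congr rfl fun l _ => ?_
      rw [star_eq_conjTranspose, Matrix.conjTranspose_apply, ← Complex.mul_conj]
      rfl
    rw [h2] at h1
    exact_mod_cast h1
  have hcol : ∀ l, ∑ k, Complex.normSq (W k l) = 1 := by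
    intro l
    have h1 : (star W * W) l l = 1 := by rw [hWW', Matrix.one_apply_eq]
    rw [Matrix.mul_apply] at h1
    have h2 : ∑ k, (star W) l k * W k l = ((∑ k, Complex.normSq (W k l) : ℝ) : ℂ) := by
      rw [Complex.ofReal_sum]
      refine Finset.sum_congr rfl fun k _ => ?_
      rw [star_eq_conjTranspose, Matrix.conjTranspose_apply, Complex.normSq_eq_conj_mul_self]
      rfl
    rw [h2] at h1
    exact_mod_cast h1
  have hent : -vnEntropy σ = ∑ k, p k * Real.log (p k) := by
    rw [vnEntropy, neg_neg]
    refine Finset.sum_congr rfl fun k _ => ?_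
    rw [eigs_herm hσ.1]
  rw [hre, hent]
  have hmassage : ∑ k, ∑ l, p k * (Real.log (q l) * Complex.normSq (W k l))
      = ∑ k, p k * ∑ l, Complex.normSq (W k l) * Real.log (q l) := by
    refine Finset.sum_congr rfl fun k _ => ?_
    rw [Finset.mul_sum]
    refine Finset.sum_congr rfl fun l _ => by ring
  rw [hmassage]
  exact scalar_klein p q (fun k l => Complex.normSq (W k l))
    (fun k => hσ.eigenvalues_nonneg k) (fun l => hτ.eigenvalues_pos l)
    (sum_eigenvalues_eq_one hτ.1 hτ1) (fun k l => Complex.normSq_nonneg _)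
    hrow hcol (sum_eigenvalues_eq_one hσ.1 hσ1)

lemma neg_vnEntropy_nonpos {σ : Matrix n n ℂ} (hσ : σ.PosSemidef) (hσ1 : σ.trace = 1) :
    -vnEntropy σ ≤ 0 := by
  rw [vnEntropy, neg_neg]
  have hsum : ∑ k, hσ.1.eigenvalues k = 1 := sum_eigenvalues_eq_one hσ.1 hσ1
  refine Finset.sum_nonpos fun k _ => ?_
  rw [eigs_herm hσ.1]
  have h0 : 0 ≤ hσ.1.eigenvalues k := hσ.eigenvalues_nonneg k
  have h1 : hσ.1.eigenvalues k ≤ 1 := by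
    rw [← hsum]
    exact Finset.single_le_sum (fun i _ => hσ.eigenvalues_nonneg i) (Finset.mem_univ k)
  have := Real.log_nonpos h0 h1
  exact mul_nonpos_of_nonneg_of_nonpos h0 this

lemma posDef_conj (U : Matrix n n ℂ) (hU : U * star U = 1) (hU' : star U * U = 1)
    {q : n → ℝ} (hq : ∀ i, 0 < q i) :
    (U * Matrix.diagonal (fun i => (q i : ℂ)) * star U).PosDef := by
  refine Matrix.PosDef.of_dotProduct_mulVec_pos (isHermitian_conj_diag U q) fun x hx => ?_
  have hc : star U *ᵥ x ≠ 0 := by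
    intro h
    apply hx
    have : U *ᵥ (star U *ᵥ x) = x := by rw [mulVec_mulVec, hU, one_mulVec]
    rw [h, Matrix.mulVec_zero] at this
    exact this.symm
  rw [quad_conj_diag]
  have heq : ∑ i, (q i : ℂ) * ((starRingEnd ℂ) ((star U *ᵥ x) i) * (star U *ᵥ x) i)
      = ((∑ i, q i * Complex.normSq ((star U *ᵥ x) i) : ℝ) : ℂ) := by
    rw [Complex.ofReal_sum]
    refine Finset.sum_congr rfl fun i _ => ?_
    rw [← Complex.normSq_eq_conj_mul_self, ← Complex.ofReal_mul]
  rw [heq, Complex.zero_lt_real]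
  obtain ⟨i0, hi0⟩ := Function.ne_iff.mp hc
  refine Finset.sum_pos' (fun i _ => mul_nonneg (hq i).le (Complex.normSq_nonneg _)) ?_
  exact ⟨i0, Finset.mem_univ i0, mul_pos (hq i0) (by simpa [Complex.normSq_pos] using hi0)⟩

lemma near_attain [Nonempty n] {σ : Matrix n n ℂ} (hσ : σ.PosSemidef) (hσ1 : σ.trace = 1)
    {ε : ℝ} (hε0 : 0 < ε) (hε1 : ε < 1) :
    ∃ τ : Matrix n n ℂ, IsState τ ∧ τ.PosDef ∧
      -vnEntropy σ ≤ (σ * mlog τ).trace.re - Real.log (1 - ε) := by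
  set U : Matrix n n ℂ := (hσ.1.eigenvectorUnitary : Matrix n n ℂ) with hU_def
  have hU : U * star U = 1 := Matrix.mem_unitaryGroup_iff.mp hσ.1.eigenvectorUnitary.2
  have hU' : star U * U = 1 := Matrix.mem_unitaryGroup_iff'.mp hσ.1.eigenvectorUnitary.2
  set p : n → ℝ := hσ.1.eigenvalues with hp_def
  have hspec : σ = U * Matrix.diagonal (fun i => ((p i : ℝ) : ℂ)) * star U :=
    hσ.1.spectral_theorem
  have hp : ∀ k, 0 ≤ p k := fun k => hσ.eigenvalues_nonneg k
  have hp1 : ∑ k, p k = 1 := sum_eigenvalues_eq_one hσ.1 hσ1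
  have hcard : 0 < (Fintype.card n : ℝ) := by
    have := Fintype.card_pos (α := n)
    exact_mod_cast this
  set q : n → ℝ := fun i => (1 - ε) * p i + ε / (Fintype.card n) with hq_def
  have hqpos : ∀ i, 0 < q i := by
    intro i
    have h1 : 0 ≤ (1 - ε) * p i := mul_nonneg (by linarith) (hp i)
    have h2 : 0 < ε / (Fintype.card n) := div_pos hε0 hcard
    rw [hq_def]; dsimp only; linarith
  set τ : Matrix n n ℂ := U * Matrix.diagonal (fun i => (q i : ℂ)) * star U with hτ_def
  have hτpd : τ.PosDef := posDef_conj U hU hU' hqpos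
  have hsumq : ∑ i, q i = 1 := by
    rw [hq_def]
    rw [Finset.sum_add_distrib, ← Finset.mul_sum, hp1, Finset.sum_const, Finset.card_univ,
      nsmul_eq_mul, mul_div_cancel₀ _ (ne_of_gt hcard)]
    ring
  have hτtr : τ.trace = 1 := by
    rw [hτ_def, trace_conj _ _ hU', Matrix.trace_diagonal, ← Complex.ofReal_sum, hsumq,
      Complex.ofReal_one]
  have hmlog : mlog τ = U * Matrix.diagonal (fun i => ((Real.log (q i) : ℝ) : ℂ)) * star U := by
    rw [hτ_def, mlog]
    exact mfun_conj Real.log U hU hU' q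
  have hcancel : ∀ X : Matrix n n ℂ, star U * (U * X) = X := by
    intro X; rw [← mul_assoc, hU', one_mul]
  have hprod : σ * mlog τ
      = U * (Matrix.diagonal (fun i => ((p i : ℝ) : ℂ))
          * Matrix.diagonal (fun i => ((Real.log (q i) : ℝ) : ℂ))) * star U := by
    conv_lhs => rw [hspec, hmlog]
    simp only [mul_assoc, hcancel]
  have htr : (σ * mlog τ).trace.re = ∑ k, p k * Real.log (q k) := by
    rw [hprod, trace_conj _ _ hU', Matrix.diagonal_mul_diagonal, Matrix.trace_diagonal]
    have : ∑ i, ((p i : ℝ) : ℂ) * ((Real.log (q i) : ℝ) : ℂ)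
        = ((∑ i, p i * Real.log (q i) : ℝ) : ℂ) := by
      rw [Complex.ofReal_sum]
      refine Finset.sum_congr rfl fun i _ => by rw [Complex.ofReal_mul]
    rw [this, Complex.ofReal_re]
  refine ⟨τ, ⟨hτpd.posSemidef, hτtr⟩, hτpd, ?_⟩
  rw [htr]
  have hent : -vnEntropy σ = ∑ k, p k * Real.log (p k) := by
    rw [vnEntropy, neg_neg]
    refine Finset.sum_congr rfl fun k _ => by rw [eigs_herm hσ.1]
  rw [hent]
  have hterm : ∀ k, p k * Real.log (p k) + p k * Real.log (1 - ε) ≤ p k * Real.log (q k) := by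
    intro k
    rcases eq_or_lt_of_le (hp k) with h0 | h0
    · rw [← h0]; simp
    · have h1 : 0 < (1 - ε) * p k := mul_pos (by linarith) h0
      have h2 : (1 - ε) * p k ≤ q k := by
        have : 0 < ε / (Fintype.card n) := div_pos hε0 hcard
        rw [hq_def]; dsimp only; linarith
      have h3 := Real.log_le_log h1 h2
      rw [Real.log_mul (by linarith : (1:ℝ) - ε ≠ 0) (ne_of_gt h0)] at h3
      have := mul_le_mul_of_nonneg_left h3 (hp k)
      calc p k * Real.log (p k) + p k * Real.log (1 - ε)
          = p k * (Real.log (1 - ε) + Real.log (p k)) := by ring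
        _ ≤ p k * Real.log (q k) := this
  have hsumterm := Finset.sum_le_sum (s := Finset.univ) (fun k _ => hterm k)
  rw [Finset.sum_add_distrib, ← Finset.sum_mul, hp1, one_mul] at hsumterm
  linarith

end Helper5

namespace Helper6
open Matrix Helper Helper2 Helper3 Helper4 Helper5
open scoped Kronecker ComplexOrder
set_option linter.unusedSectionVars false

variable {n m : Type*} [Fintype n] [DecidableEq n] [Fintype m] [DecidableEq m]

lemma kron_conjT (A : Matrix n n ℂ) (B : Matrix m m ℂ) : (A ⊗ₖ B)ᴴ = Aᴴ ⊗ₖ Bᴴ := by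
  ext x y
  rcases x with ⟨i, j⟩
  rcases y with ⟨k, l⟩
  simp [Matrix.conjTranspose_apply, Matrix.kroneckerMap_apply, star_mul']

lemma one_kron_diag (d : m → ℂ) :
    (1 : Matrix n n ℂ) ⊗ₖ Matrix.diagonal d = Matrix.diagonal (fun p : n × m => d p.2) := by
  rw [← Matrix.diagonal_one, Matrix.diagonal_kronecker_diagonal]
  congr 1
  funext p
  simp [Matrix.diagonal_one]

lemma mlog_one_kron {τ : Matrix m m ℂ} (hτ : τ.IsHermitian) :
    mlog ((1 : Matrix n n ℂ) ⊗ₖ τ) = (1 : Matrix n n ℂ) ⊗ₖ mlog τ := by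
  set V : Matrix m m ℂ := (hτ.eigenvectorUnitary : Matrix m m ℂ) with hV_def
  have hV : V * star V = 1 := Matrix.mem_unitaryGroup_iff.mp hτ.eigenvectorUnitary.2
  have hV' : star V * V = 1 := Matrix.mem_unitaryGroup_iff'.mp hτ.eigenvectorUnitary.2
  set q : m → ℝ := hτ.eigenvalues with hq_def
  have hspec : τ = V * Matrix.diagonal (fun i => ((q i : ℝ) : ℂ)) * star V :=
    hτ.spectral_theorem
  have hstar : star ((1 : Matrix n n ℂ) ⊗ₖ V) = (1 : Matrix n n ℂ) ⊗ₖ star V := by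
    rw [star_eq_conjTranspose, kron_conjT, Matrix.conjTranspose_one, star_eq_conjTranspose]
  have hkV : ((1 : Matrix n n ℂ) ⊗ₖ V) * star ((1 : Matrix n n ℂ) ⊗ₖ V) = 1 := by
    rw [hstar, ← Matrix.mul_kronecker_mul, one_mul, hV, Matrix.one_kronecker_one]
  have hkV' : star ((1 : Matrix n n ℂ) ⊗ₖ V) * ((1 : Matrix n n ℂ) ⊗ₖ V) = 1 := by
    rw [hstar, ← Matrix.mul_kronecker_mul, one_mul, hV', Matrix.one_kronecker_one]
  have hmτ : mlog τ = V * Matrix.diagonal (fun i => ((Real.log (q i) : ℝ) : ℂ)) * star V := by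
    rw [mlog, mfun, dif_pos hτ]
  have hmain := mfun_conj Real.log ((1 : Matrix n n ℂ) ⊗ₖ V) hkV hkV' (fun p : n × m => q p.2)
  have h1 : ((1 : Matrix n n ℂ) ⊗ₖ V)
        * Matrix.diagonal (fun p : n × m => ((q p.2 : ℝ) : ℂ))
        * star ((1 : Matrix n n ℂ) ⊗ₖ V) = (1 : Matrix n n ℂ) ⊗ₖ τ := by
    rw [hstar,
      show Matrix.diagonal (fun p : n × m => ((q p.2 : ℝ) : ℂ))
          = (1 : Matrix n n ℂ) ⊗ₖ Matrix.diagonal (fun i => ((q i : ℝ) : ℂ)) from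
        (one_kron_diag (n := n) (fun i => ((q i : ℝ) : ℂ))).symm,
      ← Matrix.mul_kronecker_mul, one_mul, ← Matrix.mul_kronecker_mul, one_mul, ← hspec]
  have h2 : ((1 : Matrix n n ℂ) ⊗ₖ V)
        * Matrix.diagonal (fun p : n × m => ((Real.log (q p.2) : ℝ) : ℂ))
        * star ((1 : Matrix n n ℂ) ⊗ₖ V) = (1 : Matrix n n ℂ) ⊗ₖ mlog τ := by
    rw [hstar,
      show Matrix.diagonal (fun p : n × m => ((Real.log (q p.2) : ℝ) : ℂ))
          = (1 : Matrix n n ℂ) ⊗ₖ Matrix.diagonal (fun i => ((Real.log (q i) : ℝ) : ℂ)) from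
        (one_kron_diag (n := n) (fun i => ((Real.log (q i) : ℝ) : ℂ))).symm,
      ← Matrix.mul_kronecker_mul, one_mul, ← Matrix.mul_kronecker_mul, one_mul, ← hmτ]
  rw [mlog, ← h1, hmain, h2]

end Helper6

open Matrix Helper Helper2 Helper3 Helper4 Helper5 Helper6
open scoped Kronecker ComplexOrder


/-- For positive definite M on H_A ⊗ H_B,
max over unit ψ of (⟨ψ|log M|ψ⟩ - S(Tr_A |ψ⟩⟨ψ|)) equals
max over full-rank states τ on H_B of λ_max(log M + log(I_A ⊗ τ)). -/
theorem gFun_eq_max_lmax {a b : ℕ} (ha : 0 < a) (hb : 0 < b)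
    (M : Matrix (Fin a × Fin b) (Fin a × Fin b) ℂ) (hM : M.PosDef) :
    sSup {x | ∃ ψ : Fin a × Fin b → ℂ, UnitVector ψ ∧
        x = (proj ψ * mlog M).trace.re - vnEntropy (trA (proj ψ))}
      = sSup {x | ∃ τ : Matrix (Fin b) (Fin b) ℂ, IsState τ ∧ τ.PosDef ∧
        x = lmax (mlog M + mlog ((1 : Matrix (Fin a) (Fin a) ℂ) ⊗ₖ τ))} := by
  haveI : Nonempty (Fin a) := ⟨⟨0, ha⟩⟩
  haveI : Nonempty (Fin b) := ⟨⟨0, hb⟩⟩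
  set L : Set ℝ := {x | ∃ ψ : Fin a × Fin b → ℂ, UnitVector ψ ∧
      x = (proj ψ * mlog M).trace.re - vnEntropy (trA (proj ψ))} with hL_def
  set R : Set ℝ := {x | ∃ τ : Matrix (Fin b) (Fin b) ℂ, IsState τ ∧ τ.PosDef ∧
      x = lmax (mlog M + mlog ((1 : Matrix (Fin a) (Fin a) ℂ) ⊗ₖ τ))} with hR_def
  have hlogM : (mlog M).IsHermitian := mlog_herm M
  -- L is bounded above
  have hLbdd : ∀ x ∈ L, x ≤ lmax (mlog M) := by
    rintro x ⟨ψ, hψ, rfl⟩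
    have h1 : (proj ψ * mlog M).trace.re ≤ lmax (mlog M) := by
      rw [trace_proj_mul]
      exact rayleigh_le hlogM ψ hψ
    have h2 : -vnEntropy (trA (proj ψ)) ≤ 0 :=
      neg_vnEntropy_nonpos (trA_proj_posSemidef ψ) (trace_trA_proj ψ hψ)
    linarith
  have hLBddAbove : BddAbove L := ⟨lmax (mlog M), hLbdd⟩
  -- L nonempty
  have hLne : L.Nonempty := by
    have hψ0 : UnitVector (Pi.single (Classical.arbitrary (Fin a × Fin b)) (1 : ℂ)) := by
      rw [UnitVector]
      simp [Pi.single_apply, apply_ite Complex.normSq]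
    exact ⟨_, _, hψ0, rfl⟩
  -- each element of R is dominated by an element of L
  have key_RL : ∀ x ∈ R, ∃ y ∈ L, x ≤ y := by
    rintro x ⟨τ, hτst, hτpd, rfl⟩
    set H : Matrix (Fin a × Fin b) (Fin a × Fin b) ℂ :=
      mlog M + mlog ((1 : Matrix (Fin a) (Fin a) ℂ) ⊗ₖ τ) with hH_def
    have hH : H.IsHermitian := (mlog_herm M).add (mlog_herm _)
    obtain ⟨ψ, hψ, hquad⟩ := rayleigh_attain hH
    set σ : Matrix (Fin b) (Fin b) ℂ := trA (proj ψ) with hσ_def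
    have hσPSD : σ.PosSemidef := trA_proj_posSemidef ψ
    have hσtr : σ.trace = 1 := trace_trA_proj ψ hψ
    have hsplit : star ψ ⬝ᵥ H *ᵥ ψ
        = star ψ ⬝ᵥ mlog M *ᵥ ψ
          + star ψ ⬝ᵥ mlog ((1 : Matrix (Fin a) (Fin a) ℂ) ⊗ₖ τ) *ᵥ ψ := by
      rw [hH_def, Matrix.add_mulVec, dotProduct_add]
    have hsecond : star ψ ⬝ᵥ mlog ((1 : Matrix (Fin a) (Fin a) ℂ) ⊗ₖ τ) *ᵥ ψ
        = (σ * mlog τ).trace := by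
      rw [mlog_one_kron hτpd.1, quad_kron]
    have hlmax : lmax H = (proj ψ * mlog M).trace.re + (σ * mlog τ).trace.re := by
      have := congrArg Complex.re hquad
      rw [Complex.ofReal_re] at this
      rw [← this, hsplit, hsecond, Complex.add_re, trace_proj_mul]
    have hklein : (σ * mlog τ).trace.re ≤ -vnEntropy σ :=
      klein hσPSD hσtr hτpd hτst.2
    refine ⟨(proj ψ * mlog M).trace.re - vnEntropy σ, ⟨ψ, hψ, rfl⟩, ?_⟩
    rw [hlmax]
    linarith
  -- R nonempty
  have hRne : R.Nonempty := by
    set τ0 : Matrix (Fin b) (Fin b) ℂ := Matrix.diagonal (fun _ => (((b : ℝ)⁻¹ : ℝ) : ℂ))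
      with hτ0_def
    have hbR : (0 : ℝ) < b := by exact_mod_cast hb
    have hτ0pd : τ0.PosDef := Matrix.PosDef.diagonal fun _ => Complex.zero_lt_real.mpr
      (inv_pos.mpr hbR)
    have hτ0tr : τ0.trace = 1 := by
      rw [hτ0_def, Matrix.trace_diagonal, Finset.sum_const, Finset.card_univ, Fintype.card_fin,
        nsmul_eq_mul]
      rw [← Complex.ofReal_natCast, ← Complex.ofReal_mul, mul_inv_cancel₀ (ne_of_gt hbR),
        Complex.ofReal_one]
    exact ⟨_, τ0, ⟨hτ0pd.posSemidef, hτ0tr⟩, hτ0pd, rfl⟩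
  have hRBddAbove : BddAbove R := by
    refine ⟨lmax (mlog M), fun x hx => ?_⟩
    obtain ⟨y, hyL, hxy⟩ := key_RL x hx
    exact le_trans hxy (hLbdd y hyL)
  apply le_antisymm
  · -- sSup L ≤ sSup R
    refine csSup_le hLne ?_
    rintro x ⟨ψ, hψ, rfl⟩
    set σ : Matrix (Fin b) (Fin b) ℂ := trA (proj ψ) with hσ_def
    have hσPSD : σ.PosSemidef := trA_proj_posSemidef ψ
    have hσtr : σ.trace = 1 := trace_trA_proj ψ hψ
    refine le_of_forall_pos_le_add ?_
    intro δ hδ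
    set ε : ℝ := 1 - Real.exp (-δ) with hε_def
    have hε0 : 0 < ε := by
      have : Real.exp (-δ) < 1 := Real.exp_lt_one_iff.mpr (by linarith)
      rw [hε_def]; linarith
    have hε1 : ε < 1 := by
      have := Real.exp_pos (-δ)
      rw [hε_def]; linarith
    obtain ⟨τ, hτst, hτpd, hnear⟩ := near_attain hσPSD hσtr hε0 hε1
    have hlogε : Real.log (1 - ε) = -δ := by
      rw [hε_def]
      simp [Real.log_exp]
    rw [hlogε] at hnear
    set H : Matrix (Fin a × Fin b) (Fin a × Fin b) ℂ :=
      mlog M + mlog ((1 : Matrix (Fin a) (Fin a) ℂ) ⊗ₖ τ) with hH_def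
    have hH : H.IsHermitian := (mlog_herm M).add (mlog_herm _)
    have hsplit : (star ψ ⬝ᵥ H *ᵥ ψ).re
        = (proj ψ * mlog M).trace.re + (σ * mlog τ).trace.re := by
      rw [hH_def, Matrix.add_mulVec, dotProduct_add, Complex.add_re, trace_proj_mul,
        mlog_one_kron hτpd.1, quad_kron]
    have hray : (star ψ ⬝ᵥ H *ᵥ ψ).re ≤ lmax H := rayleigh_le hH ψ hψ
    have hmem : lmax H ∈ R := ⟨τ, hτst, hτpd, rfl⟩
    have hle : lmax H ≤ sSup R := le_csSup hRBddAbove hmem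
    have : (proj ψ * mlog M).trace.re - vnEntropy σ
        ≤ (proj ψ * mlog M).trace.re + (σ * mlog τ).trace.re + δ := by linarith
    calc (proj ψ * mlog M).trace.re - vnEntropy σ
        ≤ (star ψ ⬝ᵥ H *ᵥ ψ).re + δ := by rw [hsplit]; linarith
      _ ≤ sSup R + δ := by linarith
  · -- sSup R ≤ sSup L
    refine csSup_le hRne fun x hx => ?_
    obtain ⟨y, hyL, hxy⟩ := key_RL x hx
    exact le_trans hxy (le_csSup hLBddAbove hyL)
end

section
/- For positive definite operators M on H_A ⊗ H_B and τ on H_B, exp(log M + log(I_A ⊗ τ)) = lim_{p → 0⁺} (M^{p/2} (I_A ⊗ τ)^p M^{p/2})^{1/p}. -/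
open scoped Kronecker ComplexOrder

noncomputable section Aux
open Matrix
variable {n : Type*} [Fintype n] [DecidableEq n]

lemma mfun_eq (g : ℝ → ℝ) {H : Matrix n n ℂ} (hH : H.IsHermitian) :
    mfun g H = (hH.eigenvectorUnitary : Matrix n n ℂ) *
      Matrix.diagonal (fun i => (g (hH.eigenvalues i) : ℂ)) *
      star (hH.eigenvectorUnitary : Matrix n n ℂ) := dif_pos hH

lemma hU1 {H : Matrix n n ℂ} (hH : H.IsHermitian) :
    (hH.eigenvectorUnitary : Matrix n n ℂ) * star (hH.eigenvectorUnitary : Matrix n n ℂ) = 1 :=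
  (Matrix.mem_unitaryGroup_iff).mp hH.eigenvectorUnitary.2

lemma hU2 {H : Matrix n n ℂ} (hH : H.IsHermitian) :
    star (hH.eigenvectorUnitary : Matrix n n ℂ) * (hH.eigenvectorUnitary : Matrix n n ℂ) = 1 :=
  (Matrix.mem_unitaryGroup_iff').mp hH.eigenvectorUnitary.2

lemma diag_herm (v : n → ℝ) :
    (Matrix.diagonal (fun i => (v i : ℂ)))ᴴ = Matrix.diagonal (fun i => (v i : ℂ)) := by
  rw [diagonal_conjTranspose]
  congr 1
  rw [show (star fun i => (v i : ℂ)) = fun i => star ((v i : ℂ)) from rfl]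
  funext i
  simp [Complex.conj_ofReal]

lemma mfun_isHermitian (g : ℝ → ℝ) {H : Matrix n n ℂ} (hH : H.IsHermitian) :
    (mfun g H).IsHermitian := by
  rw [mfun_eq g hH]
  show _ᴴ = _
  rw [conjTranspose_mul, conjTranspose_mul, diag_herm, ← star_eq_conjTranspose,
    ← star_eq_conjTranspose, star_star, mul_assoc]

lemma mfun_sub (g h : ℝ → ℝ) {H : Matrix n n ℂ} (hH : H.IsHermitian) :
    mfun g H - mfun h H = mfun (fun t => g t - h t) H := by
  rw [mfun_eq g hH, mfun_eq h hH, mfun_eq _ hH, ← sub_mul, ← Matrix.mul_sub,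
    Matrix.diagonal_sub]
  norm_cast

lemma mfun_id {H : Matrix n n ℂ} (hH : H.IsHermitian) : mfun (fun t => t) H = H := by
  rw [mfun_eq _ hH]
  exact (hH.spectral_theorem).symm

lemma mfun_one {H : Matrix n n ℂ} (hH : H.IsHermitian) : mfun (fun _ => 1) H = 1 := by
  rw [mfun_eq _ hH]
  simp only [Complex.ofReal_one, Matrix.diagonal_one, mul_one]
  exact hU1 hH

lemma posDef_conj {C B : Matrix n n ℂ} (hC : C.PosDef) (hB : IsUnit B) :
    (Bᴴ * C * B).PosDef := by
  refine Matrix.PosDef.of_dotProduct_mulVec_pos (Matrix.isHermitian_conjTranspose_mul_mul B hC.1) fun x hx => ?_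
  have hinj : Function.Injective B.mulVec := Matrix.mulVec_injective_iff_isUnit.mpr hB
  have hx' : B *ᵥ x ≠ 0 := fun h => hx (hinj (by simpa using h))
  simpa only [star_mulVec, dotProduct_mulVec, vecMul_vecMul] using hC.dotProduct_mulVec_pos hx'

lemma isUnit_eigenvectorUnitary {H : Matrix n n ℂ} (hH : H.IsHermitian) :
    IsUnit (hH.eigenvectorUnitary : Matrix n n ℂ) :=
  ⟨⟨_, star (hH.eigenvectorUnitary : Matrix n n ℂ), hU1 hH, hU2 hH⟩, rfl⟩

lemma isUnit_star_eigenvectorUnitary {H : Matrix n n ℂ} (hH : H.IsHermitian) :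
    IsUnit (star (hH.eigenvectorUnitary : Matrix n n ℂ)) :=
  ⟨⟨_, (hH.eigenvectorUnitary : Matrix n n ℂ), hU2 hH, hU1 hH⟩, rfl⟩

lemma mfun_posDef (g : ℝ → ℝ) {X : Matrix n n ℂ} (hX : X.IsHermitian)
    (hg : ∀ i, 0 < g (hX.eigenvalues i)) : (mfun g X).PosDef := by
  rw [mfun_eq g hX]
  have hD : (Matrix.diagonal (fun i => (g (hX.eigenvalues i) : ℂ))).PosDef :=
    Matrix.PosDef.diagonal fun i => by exact_mod_cast hg i
  have := posDef_conj hD (isUnit_star_eigenvectorUnitary hX)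
  rwa [← star_eq_conjTranspose, star_star] at this

lemma mexp_posDef {H : Matrix n n ℂ} (hH : H.IsHermitian) : (mexp H).PosDef :=
  mfun_posDef _ hH fun i => Real.exp_pos _

lemma mexp_isHermitian {H : Matrix n n ℂ} (hH : H.IsHermitian) : (mexp H).IsHermitian :=
  mfun_isHermitian _ hH

lemma mexp_conj_posDef {H C : Matrix n n ℂ} (hH : H.IsHermitian) (hC : C.PosDef) :
    (mexp H * C * mexp H).PosDef := by
  have h1 := posDef_conj hC (mexp_posDef hH).isUnit
  rwa [mexp_isHermitian hH] at h1

end Aux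

section NormSection
open Matrix NormedSpace
attribute [local instance] Matrix.frobeniusNormedAddCommGroup Matrix.frobeniusNormedRing
  Matrix.frobeniusNormedAlgebra

variable {n : Type*} [Fintype n] [DecidableEq n]

lemma inv_eigenvectorUnitary {H : Matrix n n ℂ} (hH : H.IsHermitian) :
    (hH.eigenvectorUnitary : Matrix n n ℂ)⁻¹ = star (hH.eigenvectorUnitary : Matrix n n ℂ) :=
  Matrix.inv_eq_left_inv (hU2 hH)

lemma exp_diag_real (v : n → ℝ) :
    exp (Matrix.diagonal (fun i => (v i : ℂ))) =
      Matrix.diagonal (fun i => (Real.exp (v i) : ℂ)) := by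
  rw [Matrix.exp_diagonal]
  have : exp (fun i => ((v i : ℝ) : ℂ)) = fun i => ((Real.exp (v i) : ℝ) : ℂ) := by
    funext i
    rw [Pi.coe_exp, ← Complex.exp_eq_exp_ℂ, Complex.ofReal_exp]
  rw [this]

lemma exp_conj_diag {H : Matrix n n ℂ} (hH : H.IsHermitian) (v : n → ℝ) :
    exp ((hH.eigenvectorUnitary : Matrix n n ℂ) * Matrix.diagonal (fun i => (v i : ℂ)) *
        star (hH.eigenvectorUnitary : Matrix n n ℂ)) =
      (hH.eigenvectorUnitary : Matrix n n ℂ) * Matrix.diagonal (fun i => (Real.exp (v i) : ℂ)) *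
        star (hH.eigenvectorUnitary : Matrix n n ℂ) := by
  rw [← inv_eigenvectorUnitary hH, Matrix.exp_conj _ _ (isUnit_eigenvectorUnitary hH),
    exp_diag_real]

lemma mexp_eq_exp {H : Matrix n n ℂ} (hH : H.IsHermitian) : mexp H = exp H := by
  conv_rhs => rw [hH.spectral_theorem]
  rw [show (Matrix.diagonal (RCLike.ofReal ∘ hH.eigenvalues) : Matrix n n ℂ) =
    Matrix.diagonal (fun i => ((hH.eigenvalues i : ℝ) : ℂ)) from rfl]
  rw [Unitary.conjStarAlgAut_apply, exp_conj_diag hH, mexp, mfun_eq _ hH]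

lemma smul_mfun_diag (q : ℝ) {H : Matrix n n ℂ} (hH : H.IsHermitian) (g : ℝ → ℝ) :
    q • mfun g H = (hH.eigenvectorUnitary : Matrix n n ℂ) *
      Matrix.diagonal (fun i => ((q * g (hH.eigenvalues i) : ℝ) : ℂ)) *
      star (hH.eigenvectorUnitary : Matrix n n ℂ) := by
  rw [mfun_eq g hH, ← Matrix.smul_mul, ← Matrix.mul_smul, ← Matrix.diagonal_smul]
  have : (q • fun i => (g (hH.eigenvalues i) : ℂ)) = fun i => ((q * g (hH.eigenvalues i) : ℝ) : ℂ) := by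
    funext i
    simp [Complex.real_smul, Complex.ofReal_mul]
  rw [this]

lemma mpow_eq_mexp {X : Matrix n n ℂ} (hX : X.PosDef) (q : ℝ) :
    mpow q X = mexp (q • mlog X) := by
  have hlogH : (mlog X).IsHermitian := mfun_isHermitian _ hX.1
  have hqH : (q • mlog X).IsHermitian := by
    have : (q • mlog X)ᴴ = q • mlog X := by
      rw [Matrix.conjTranspose_smul, star_trivial, hlogH.eq]
    exact this
  rw [mexp_eq_exp hqH, mlog, smul_mfun_diag q hX.1, exp_conj_diag hX.1, mpow, mfun_eq _ hX.1]
  have : (fun i => ((hX.1.eigenvalues i ^ q : ℝ) : ℂ)) =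
      fun i => ((Real.exp (q * Real.log (hX.1.eigenvalues i)) : ℝ) : ℂ) := by
    funext i
    rw [Real.rpow_def_of_pos (hX.eigenvalues_pos i), mul_comm]
  rw [this]

end NormSection

noncomputable def fnorm {n : Type*} [Fintype n] (M : Matrix n n ℂ) : ℝ :=
  Real.sqrt (∑ i, ∑ j, Complex.normSq (M i j))

section NormSection2
open Matrix NormedSpace
attribute [local instance] Matrix.frobeniusNormedAddCommGroup Matrix.frobeniusNormedRing
  Matrix.frobeniusNormedAlgebra

variable {n : Type*} [Fintype n] [DecidableEq n]

lemma frob_sq2 (M : Matrix n n ℂ) : ‖M‖^2 = ∑ i, ∑ j, Complex.normSq (M i j) := by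
  rw [Matrix.frobenius_norm_def]
  rw [← Real.rpow_natCast (_ ^ (1/2 : ℝ)) 2, ← Real.rpow_mul (by positivity)]
  norm_num
  congr 1
  funext i
  congr 1
  funext j
  exact Complex.sq_norm _

lemma fnorm_eq (M : Matrix n n ℂ) : fnorm M = ‖M‖ := by
  rw [fnorm, ← frob_sq2, Real.sqrt_sq (norm_nonneg M)]

lemma frob_sq (M : Matrix n n ℂ) : ‖M‖^2 = ((Mᴴ * M).trace).re := by
  have h : ((Mᴴ * M).trace).re = ∑ j, ∑ i, Complex.normSq (M i j) := by
    rw [Matrix.trace]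
    rw [Complex.re_sum]
    congr 1
    funext j
    rw [Matrix.diag]
    rw [Matrix.mul_apply, Complex.re_sum]
    congr 1
    funext i
    rw [Matrix.conjTranspose_apply, Complex.star_def, mul_comm, Complex.mul_conj]
    exact Complex.ofReal_re _
  rw [frob_sq2, h, Finset.sum_comm]

lemma frob_mfun_sq (g : ℝ → ℝ) {H : Matrix n n ℂ} (hH : H.IsHermitian) :
    ‖mfun g H‖^2 = ∑ i, (g (hH.eigenvalues i))^2 := by
  rw [frob_sq, (mfun_isHermitian g hH).eq, mfun_eq g hH]
  set U := (hH.eigenvectorUnitary : Matrix n n ℂ) with hU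
  set D := Matrix.diagonal (fun i => (g (hH.eigenvalues i) : ℂ)) with hD
  have hmul : (U * D * star U) * (U * D * star U) = U * (D * D) * star U := by
    simp only [mul_assoc]
    rw [show star U * (U * (D * star U)) = D * star U from by
      rw [← mul_assoc, hU2 hH, one_mul]]
  rw [hmul, Matrix.trace_mul_cycle, ← mul_assoc, hU2 hH, one_mul, hD,
    Matrix.diagonal_mul_diagonal, Matrix.trace_diagonal, Complex.re_sum]
  congr 1
  funext i
  rw [← Complex.ofReal_mul, ← pow_two]
  exact Complex.ofReal_re _

end NormSection2

lemma scalar_log_est {t : ℝ} (hpos : 0 < t) (h : |t - 1| ≤ 1/2) :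
    |Real.log t - (t - 1)| ≤ 2 * (t - 1)^2 := by
  have hx : |1 - t| < 1 := by rw [abs_sub_comm]; linarith [abs_nonneg (t-1), h]
  have key := Real.abs_log_sub_add_sum_range_le hx 1
  simp only [Finset.range_one, Finset.sum_singleton, pow_one, Nat.cast_zero, zero_add,
    Nat.cast_one, div_one] at key
  have h1 : (1 : ℝ) - (1 - t) = t := by ring
  rw [h1] at key
  have h2 : (1 - t) + Real.log t = Real.log t - (t - 1) := by ring
  rw [h2] at key
  have h3 : |1 - t| ^ 2 = (t - 1)^2 := by rw [abs_sub_comm, sq_abs]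
  have h4 : (1:ℝ)/2 ≤ 1 - |1 - t| := by rw [abs_sub_comm]; linarith
  calc |Real.log t - (t - 1)| ≤ |1 - t| ^ 2 / (1 - |1 - t|) := key
    _ ≤ (t-1)^2 / (1/2) := by
        rw [h3]
        apply div_le_div_of_nonneg_left (sq_nonneg _) (by norm_num) h4
    _ = 2 * (t-1)^2 := by ring

section NormSection3
open Matrix NormedSpace
attribute [local instance] Matrix.frobeniusNormedAddCommGroup Matrix.frobeniusNormedRing
  Matrix.frobeniusNormedAlgebra

variable {n : Type*} [Fintype n] [DecidableEq n]

lemma abs_eig_le (g : ℝ → ℝ) {H : Matrix n n ℂ} (hH : H.IsHermitian) (i : n) :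
    |g (hH.eigenvalues i)| ≤ ‖mfun g H‖ := by
  have h2 : (g (hH.eigenvalues i))^2 ≤ ‖mfun g H‖^2 := by
    rw [frob_mfun_sq g hH]
    exact Finset.single_le_sum (f := fun j => (g (hH.eigenvalues j))^2) (fun j _ => sq_nonneg _) (Finset.mem_univ i)
  calc |g (hH.eigenvalues i)| = Real.sqrt ((g (hH.eigenvalues i))^2) := (Real.sqrt_sq_eq_abs _).symm
    _ ≤ Real.sqrt (‖mfun g H‖^2) := Real.sqrt_le_sqrt h2
    _ = ‖mfun g H‖ := Real.sqrt_sq (norm_nonneg _)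

lemma sub_one_eq_mfun {X : Matrix n n ℂ} (hX : X.IsHermitian) :
    X - 1 = mfun (fun t => t - 1) X := by
  rw [← mfun_sub _ _ hX, mfun_id hX, mfun_one hX]

lemma log_est {X : Matrix n n ℂ} (hX : X.PosDef) (h : ‖X - 1‖ ≤ 1/2) :
    ‖mlog X - (X - 1)‖ ≤ 2 * ‖X - 1‖^2 := by
  have e2 : X - 1 = mfun (fun t => t - 1) X := sub_one_eq_mfun hX.1
  have e1 : mlog X - (X - 1) = mfun (fun t => Real.log t - (t - 1)) X := by
    rw [e2, mlog]; exact mfun_sub _ _ hX.1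
  have hsum : ∑ i, ((hX.1.eigenvalues i) - 1)^2 = ‖X - 1‖^2 := by
    rw [e2, frob_mfun_sq _ hX.1]
  have heig : ∀ i, |(hX.1.eigenvalues i) - 1| ≤ 1/2 := fun i => by
    have := abs_eig_le (fun t => t - 1) hX.1 i
    rw [← e2] at this
    exact this.trans h
  have h2 : ‖mfun (fun t => Real.log t - (t - 1)) X‖^2 ≤ (2 * ‖X - 1‖^2)^2 := by
    rw [frob_mfun_sq _ hX.1]
    calc ∑ i, (Real.log (hX.1.eigenvalues i) - ((hX.1.eigenvalues i) - 1))^2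
        ≤ ∑ i, 4 * (((hX.1.eigenvalues i) - 1)^2)^2 := by
          apply Finset.sum_le_sum
          intro i _
          have hs := scalar_log_est (hX.eigenvalues_pos i) (heig i)
          calc (Real.log (hX.1.eigenvalues i) - ((hX.1.eigenvalues i) - 1))^2
              = |Real.log (hX.1.eigenvalues i) - ((hX.1.eigenvalues i) - 1)|^2 := (sq_abs _).symm
            _ ≤ (2 * ((hX.1.eigenvalues i) - 1)^2)^2 := by
                exact pow_le_pow_left₀ (abs_nonneg _) hs 2
            _ = 4 * (((hX.1.eigenvalues i) - 1)^2)^2 := by ring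
      _ = 4 * ∑ i, (((hX.1.eigenvalues i) - 1)^2)^2 := by rw [Finset.mul_sum]
      _ ≤ 4 * (∑ i, ((hX.1.eigenvalues i) - 1)^2)^2 := by
          have := Finset.sum_sq_le_sq_sum_of_nonneg
            (f := fun i => ((hX.1.eigenvalues i) - 1)^2) (s := Finset.univ)
            (fun i _ => sq_nonneg _)
          linarith
      _ = (2 * ‖X - 1‖^2)^2 := by rw [hsum]; ring
  rw [e1]
  calc ‖mfun (fun t => Real.log t - (t - 1)) X‖
      = Real.sqrt (‖mfun (fun t => Real.log t - (t - 1)) X‖^2) :=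
        (Real.sqrt_sq (norm_nonneg _)).symm
    _ ≤ Real.sqrt ((2 * ‖X - 1‖^2)^2) := Real.sqrt_le_sqrt h2
    _ = 2 * ‖X - 1‖^2 := Real.sqrt_sq (by positivity)

end NormSection3

section TrotterDefs
open Matrix
variable {n : Type*} [Fintype n] [DecidableEq n]

lemma herm_smul (q : ℝ) {H : Matrix n n ℂ} (hH : H.IsHermitian) : (q • H).IsHermitian := by
  have : (q • H)ᴴ = q • H := by rw [Matrix.conjTranspose_smul, star_trivial, hH.eq]
  exact this

noncomputable def trotterG (A B : Matrix n n ℂ) (p : ℝ) : Matrix n n ℂ :=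
  mexp (p • ((2⁻¹:ℝ) • A)) * mexp (p • B) * mexp (p • ((2⁻¹:ℝ) • A))

lemma trotterG_posDef {A B : Matrix n n ℂ} (hA : A.IsHermitian) (hB : B.IsHermitian) (p : ℝ) :
    (trotterG A B p).PosDef :=
  mexp_conj_posDef (herm_smul p (herm_smul _ hA)) (mexp_posDef (herm_smul p hB))

end TrotterDefs

section NormSection4
open Matrix NormedSpace Filter Topology
attribute [local instance] Matrix.frobeniusNormedAddCommGroup Matrix.frobeniusNormedRing
  Matrix.frobeniusNormedAlgebra

variable {n : Type*} [Fintype n] [DecidableEq n]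

lemma main_est {A B : Matrix n n ℂ} (hA : A.IsHermitian) (hB : B.IsHermitian) :
    Filter.Tendsto (fun p : ℝ => fnorm (mexp (p⁻¹ • mlog (trotterG A B p)) - mexp (A + B)))
      (nhdsWithin 0 (Set.Ioi 0)) (nhds 0) := by
  set A₂ := (2⁻¹:ℝ) • A with hA₂def
  have hA₂ : A₂.IsHermitian := herm_smul _ hA
  have hGexp : ∀ p : ℝ, trotterG A B p = exp (p • A₂) * exp (p • B) * exp (p • A₂) := by
    intro p
    rw [trotterG, mexp_eq_exp (herm_smul p hA₂), mexp_eq_exp (herm_smul p hB)]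
  have hG0 : trotterG A B 0 = 1 := by
    rw [hGexp 0]
    simp [exp_zero]
  have hDrv : HasDerivAt (fun p => trotterG A B p) (A + B) 0 := by
    have d1 : HasDerivAt (fun p : ℝ => exp (p • A₂)) A₂ 0 := by
      have := hasDerivAt_exp_smul_const (𝔸 := Matrix n n ℂ) A₂ (0:ℝ)
      simp only [zero_smul, exp_zero, one_mul] at this
      exact this
    have d2 : HasDerivAt (fun p : ℝ => exp (p • B)) B 0 := by
      have := hasDerivAt_exp_smul_const (𝔸 := Matrix n n ℂ) B (0:ℝ)
      simp only [zero_smul, exp_zero, one_mul] at this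
      exact this
    have d123 := (d1.mul d2).mul d1
    simp only [zero_smul, exp_zero, mul_one, one_mul, Pi.mul_apply] at d123
    have hval : A₂ + B + A₂ = A + B := by
      rw [hA₂def]
      module
    rw [hval] at d123
    refine d123.congr_of_eventuallyEq (Eventually.of_forall fun p => ?_)
    exact hGexp p
  have hslope : Tendsto (fun p : ℝ => p⁻¹ • (trotterG A B p - 1)) (𝓝[>] (0:ℝ)) (𝓝 (A+B)) := by
    have h1 := hasDerivAt_iff_tendsto_slope.mp hDrv
    have h2 := h1.mono_left (nhdsWithin_mono (0:ℝ) (fun x hx => ne_of_gt hx))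
    refine h2.congr (fun p => ?_)
    rw [slope_def_module, hG0, sub_zero]
  have hnorm_slope : Tendsto (fun p => ‖p⁻¹ • (trotterG A B p - 1)‖) (𝓝[>] (0:ℝ)) (𝓝 ‖A+B‖) :=
    hslope.norm
  have hsub : Tendsto (fun p => ‖p⁻¹ • (trotterG A B p - 1) - (A+B)‖) (𝓝[>] (0:ℝ)) (𝓝 0) :=
    tendsto_iff_norm_sub_tendsto_zero.mp hslope
  have hGto1 : Tendsto (fun p => ‖trotterG A B p - 1‖) (𝓝[>] (0:ℝ)) (𝓝 0) := by
    have hc := ((hDrv.continuousAt.tendsto.mono_left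
      (nhdsWithin_le_nhds (s := Set.Ioi (0:ℝ)))).sub_const (1 : Matrix n n ℂ))
    rw [hG0, sub_self] at hc
    simpa using hc.norm
  have hEvHalf : ∀ᶠ p in 𝓝[>] (0:ℝ), ‖trotterG A B p - 1‖ ≤ 1/2 :=
    hGto1.eventually (eventually_le_nhds (by norm_num))
  have hbound : ∀ᶠ p in 𝓝[>] (0:ℝ), ‖p⁻¹ • mlog (trotterG A B p) - (A+B)‖ ≤
      2 * p * ‖p⁻¹ • (trotterG A B p - 1)‖^2 + ‖p⁻¹ • (trotterG A B p - 1) - (A+B)‖ := by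
    filter_upwards [hEvHalf, self_mem_nhdsWithin] with p hhalf hp
    have hp0 : (0:ℝ) < p := hp
    have key := log_est (trotterG_posDef hA hB p) hhalf
    have split : p⁻¹ • mlog (trotterG A B p) - (A+B) =
        p⁻¹ • (mlog (trotterG A B p) - (trotterG A B p - 1)) +
          (p⁻¹ • (trotterG A B p - 1) - (A+B)) := by
      module
    have e : 2 * p * ‖p⁻¹ • (trotterG A B p - 1)‖^2 = p⁻¹ * (2 * ‖trotterG A B p - 1‖^2) := by
      rw [norm_smul, Real.norm_eq_abs, abs_of_pos (inv_pos.mpr hp0)]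
      field_simp
    calc ‖p⁻¹ • mlog (trotterG A B p) - (A+B)‖
        ≤ ‖p⁻¹ • (mlog (trotterG A B p) - (trotterG A B p - 1))‖ +
            ‖p⁻¹ • (trotterG A B p - 1) - (A+B)‖ := by rw [split]; exact norm_add_le _ _
      _ ≤ 2 * p * ‖p⁻¹ • (trotterG A B p - 1)‖^2 +
            ‖p⁻¹ • (trotterG A B p - 1) - (A+B)‖ := by
          rw [norm_smul, Real.norm_eq_abs, abs_of_pos (inv_pos.mpr hp0), e]
          have := mul_le_mul_of_nonneg_left key (le_of_lt (inv_pos.mpr hp0))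
          linarith
  have hrhs : Tendsto (fun p => 2 * p * ‖p⁻¹ • (trotterG A B p - 1)‖^2 +
      ‖p⁻¹ • (trotterG A B p - 1) - (A+B)‖) (𝓝[>] (0:ℝ)) (𝓝 0) := by
    have h1 : Tendsto (fun p : ℝ => 2 * p) (𝓝[>] (0:ℝ)) (𝓝 0) := by
      have : Tendsto (fun p : ℝ => 2 * p) (𝓝 (0:ℝ)) (𝓝 (2 * 0)) :=
        (continuous_const.mul continuous_id).tendsto 0
      simpa using this.mono_left nhdsWithin_le_nhds
    have h2 := hnorm_slope.pow 2
    have := (h1.mul h2).add hsub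
    simpa using this
  have hsq : Tendsto (fun p => ‖p⁻¹ • mlog (trotterG A B p) - (A+B)‖) (𝓝[>] (0:ℝ)) (𝓝 0) :=
    squeeze_zero' (Eventually.of_forall fun p => norm_nonneg _) hbound hrhs
  have hcore : Tendsto (fun p => p⁻¹ • mlog (trotterG A B p)) (𝓝[>] (0:ℝ)) (𝓝 (A+B)) :=
    tendsto_iff_norm_sub_tendsto_zero.mpr hsq
  have hexp : Tendsto (fun p => exp (p⁻¹ • mlog (trotterG A B p))) (𝓝[>] (0:ℝ))
      (𝓝 (exp (A+B))) := (exp_continuous.tendsto _).comp hcore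
  have hfinal := tendsto_iff_norm_sub_tendsto_zero.mp hexp
  refine (tendsto_congr (fun p => ?_)).mpr hfinal
  have hherm : (p⁻¹ • mlog (trotterG A B p)).IsHermitian :=
    herm_smul _ (mfun_isHermitian _ (trotterG_posDef hA hB p).1)
  rw [mexp_eq_exp hherm, mexp_eq_exp (hA.add hB), fnorm_eq]

end NormSection4

section Transfer
open Filter Topology
variable {n : Type*} [Fintype n] [DecidableEq n]

lemma entry_le_fnorm (M : Matrix n n ℂ) (i j : n) : ‖M i j‖ ≤ fnorm M := by
  have h1 : Complex.normSq (M i j) ≤ ∑ j', Complex.normSq (M i j') :=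
    Finset.single_le_sum (f := fun j' => Complex.normSq (M i j'))
      (fun _ _ => Complex.normSq_nonneg _) (Finset.mem_univ j)
  have h2 : ∑ j', Complex.normSq (M i j') ≤ ∑ i', ∑ j', Complex.normSq (M i' j') :=
    Finset.single_le_sum (f := fun i' => ∑ j', Complex.normSq (M i' j'))
      (fun _ _ => Finset.sum_nonneg fun _ _ => Complex.normSq_nonneg _) (Finset.mem_univ i)
  calc ‖M i j‖ = Real.sqrt (Complex.normSq (M i j)) := by
        rw [Complex.norm_def]
    _ ≤ Real.sqrt (∑ i', ∑ j', Complex.normSq (M i' j')) :=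
        Real.sqrt_le_sqrt (h1.trans h2)
    _ = fnorm M := rfl

lemma tendsto_of_fnorm {f : ℝ → Matrix n n ℂ} {L : Matrix n n ℂ} {l : Filter ℝ}
    (h : Tendsto (fun x => fnorm (f x - L)) l (nhds 0)) : Tendsto f l (nhds L) := by
  have hentry : ∀ i j, Tendsto (fun x => f x i j) l (nhds (L i j)) := by
    intro i j
    rw [tendsto_iff_norm_sub_tendsto_zero]
    apply squeeze_zero (fun x => norm_nonneg _) (fun x => ?_) h
    have := entry_le_fnorm (f x - L) i j
    simpa [Matrix.sub_apply] using this
  exact tendsto_pi_nhds.mpr fun i => tendsto_pi_nhds.mpr fun j => hentry i j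

end Transfer

section Kron
open Matrix
open scoped Kronecker ComplexOrder
variable {a b : Type*} [Fintype a] [DecidableEq a] [Fintype b] [DecidableEq b]

lemma one_kron_posDef {τ : Matrix b b ℂ} (hτ : τ.PosDef) :
    ((1 : Matrix a a ℂ) ⊗ₖ τ).PosDef := by
  refine Matrix.PosDef.of_dotProduct_mulVec_pos ?_ ?_
  · show _ᴴ = _
    ext ⟨i, j⟩ ⟨k, l⟩
    rw [Matrix.conjTranspose_apply, Matrix.kroneckerMap_apply, Matrix.kroneckerMap_apply,
      star_mul']
    congr 1
    · rw [← Matrix.conjTranspose_apply, Matrix.conjTranspose_one]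
    · rw [← Matrix.conjTranspose_apply, hτ.1.eq]
  · intro x hx
    have key : star x ⬝ᵥ ((1 : Matrix a a ℂ) ⊗ₖ τ) *ᵥ x =
        ∑ i, star (fun j => x (i, j)) ⬝ᵥ τ *ᵥ (fun j => x (i, j)) := by
      simp only [dotProduct, Matrix.mulVec, Matrix.kroneckerMap_apply, Matrix.one_apply,
        Fintype.sum_prod_type, Pi.star_apply]
      congr 1
      funext i
      congr 1
      funext j
      congr 1
      rw [Finset.sum_comm]
      apply Finset.sum_congr rfl
      intro l _
      simp [ite_mul]
    rw [key]
    obtain ⟨⟨i0, j0⟩, hne⟩ := Function.ne_iff.mp hx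
    have hrow : (fun j => x (i0, j)) ≠ 0 := by
      intro hz
      exact hne (by simpa using congr_fun hz j0)
    exact Finset.sum_pos' (fun i _ => hτ.posSemidef.dotProduct_mulVec_nonneg _)
      ⟨i0, Finset.mem_univ _, hτ.dotProduct_mulVec_pos hrow⟩

end Kron

/-- For positive definite M on H_A ⊗ H_B and τ on H_B,
exp(log M + log(I_A ⊗ τ)) = lim_{p→0⁺} (M^{p/2} (I_A ⊗ τ)^p M^{p/2})^{1/p}
(symmetric Lie–Trotter formula). -/
theorem lie_trotter_limit {a b : ℕ} (ha : 0 < a) (hb : 0 < b)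
    (M : Matrix (Fin a × Fin b) (Fin a × Fin b) ℂ) (hM : M.PosDef)
    (τ : Matrix (Fin b) (Fin b) ℂ) (hτ : τ.PosDef) :
    Filter.Tendsto
      (fun p : ℝ => mpow (1/p)
        (mpow (p/2) M * mpow p ((1 : Matrix (Fin a) (Fin a) ℂ) ⊗ₖ τ) * mpow (p/2) M))
      (nhdsWithin 0 (Set.Ioi 0))
      (nhds (mexp (mlog M + mlog ((1 : Matrix (Fin a) (Fin a) ℂ) ⊗ₖ τ)))) := by
  have hC : ((1 : Matrix (Fin a) (Fin a) ℂ) ⊗ₖ τ).PosDef := one_kron_posDef hτ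
  have hA : (mlog M).IsHermitian := mfun_isHermitian _ hM.1
  have hB : (mlog ((1 : Matrix (Fin a) (Fin a) ℂ) ⊗ₖ τ)).IsHermitian := mfun_isHermitian _ hC.1
  have hev : (fun p : ℝ => mexp (p⁻¹ •
        mlog (trotterG (mlog M) (mlog ((1 : Matrix (Fin a) (Fin a) ℂ) ⊗ₖ τ)) p))) =ᶠ[nhdsWithin 0 (Set.Ioi 0)]
      (fun p : ℝ => mpow (1/p)
        (mpow (p/2) M * mpow p ((1 : Matrix (Fin a) (Fin a) ℂ) ⊗ₖ τ) * mpow (p/2) M)) := by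
    filter_upwards [self_mem_nhdsWithin] with p hp
    have hFG : mpow (p/2) M * mpow p ((1 : Matrix (Fin a) (Fin a) ℂ) ⊗ₖ τ) * mpow (p/2) M =
        trotterG (mlog M) (mlog ((1 : Matrix (Fin a) (Fin a) ℂ) ⊗ₖ τ)) p := by
      rw [trotterG, mpow_eq_mexp hM, mpow_eq_mexp hC, smul_smul]
      congr 3 <;> rw [smul_smul, div_eq_mul_inv]
    rw [hFG, mpow_eq_mexp (trotterG_posDef hA hB p), one_div]
  exact Filter.Tendsto.congr' hev (tendsto_of_fnorm (main_est hA hB))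
end
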